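/- arXiv:2403.02855 — 7 statements merged into one kernel-verified Lean document; each statement's English description precedes it below -/
import Mathlib

section
/- Let Γ be an abelian group, H ≤ Γ a subgroup, and A a Γ-graded algebra. If a Γ/H-graded A-module V admits a Γ-grading refining its Γ/H-grading (compatible with the module action), then V embeds as a Γ-graded submodule of its loop module L_H(V), via the map sending a homogeneous element w of degree γ to w ⊗ e_γ. -/
/-- If a `Γ/H`-graded module `V` over a `Γ`-graded algebra `A`
admits a `Γ`-grading `W` refining its `Γ/H`-grading (compatible with the module
action), then `V` embeds as a `Γ`-graded submodule of its loop module
`L_H(V) = ⊕_γ V_{γ+H} ⊗ e_γ` (modelled as functions `Γ → V` supported in the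
appropriate components), via the map sending a homogeneous `w` of degree `γ`
to `w ⊗ e_γ` (i.e. `Pi.single γ w`).  The embedding is injective, homogeneous
of degree `0`, lands in the loop module, and intertwines the action of
homogeneous elements of `A` (which acts on the loop module by
`x·(v ⊗ e_β) = xv ⊗ e_{α+β}` for `x ∈ A_α`). -/
theorem stmt3 {F : Type*} [Field F] {Γ : Type*} [AddCommGroup Γ] [DecidableEq Γ]
    {H : AddSubgroup Γ} [DecidableEq (Γ ⧸ H)]
    {A : Type*} [Ring A] [Algebra F A] (𝒜 : Γ → Submodule F A)
    (h𝒜 : ∀ α β : Γ, ∀ a ∈ 𝒜 α, ∀ b ∈ 𝒜 β, a * b ∈ 𝒜 (α + β))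
    {V : Type*} [AddCommGroup V] [Module F V]
    (ρ : A →ₐ[F] Module.End F V)
    (ℬ : Γ ⧸ H → Submodule F V)
    (hℬ : DirectSum.IsInternal ℬ)
    (hcompat : ∀ (α : Γ) (a : A), a ∈ 𝒜 α → ∀ (Λ : Γ ⧸ H) (v : V), v ∈ ℬ Λ →
      ρ a v ∈ ℬ ((QuotientAddGroup.mk α : Γ ⧸ H) + Λ))
    (W : Γ → Submodule F V)
    (hW : DirectSum.IsInternal W)
    (hWrefine : ∀ γ : Γ, W γ ≤ ℬ (QuotientAddGroup.mk γ))
    (hWcompat : ∀ (α : Γ) (a : A), a ∈ 𝒜 α → ∀ (γ : Γ) (v : V), v ∈ W γ →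
      ρ a v ∈ W (α + γ)) :
    ∃ Φ : V →ₗ[F] (Γ → V),
      Function.Injective Φ ∧
      (∀ (γ : Γ) (w : V), w ∈ W γ → Φ w = Pi.single γ w) ∧
      (∀ v : V, Φ v ∈ Submodule.pi Set.univ
        (fun γ : Γ => ℬ (QuotientAddGroup.mk γ))) ∧
      (∀ (α : Γ) (a : A), a ∈ 𝒜 α → ∀ v : V,
        Φ (ρ a v) = fun γ : Γ => ρ a (Φ v (γ - α))) := by
  classical
  let e := LinearEquiv.ofBijective (DirectSum.coeLinearMap W) hW
  refine ⟨LinearMap.pi (fun γ => (W γ).subtype ∘ₗ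
      (DirectSum.component F Γ _ γ) ∘ₗ e.symm.toLinearMap), ?_, ?_, ?_, ?_⟩
  · intro v v' h
    apply e.symm.injective
    refine DFinsupp.ext fun γ => Subtype.ext ?_
    exact congrFun h γ
  · intro γ w hw
    funext γ'
    show ((e.symm w) γ' : V) = (Pi.single γ w : Γ → V) γ'
    by_cases hγ : γ = γ'
    · subst hγ
      rw [hW.ofBijective_coeLinearMap_of_mem hw, Pi.single_eq_same]
    · rw [hW.ofBijective_coeLinearMap_of_mem_ne hγ hw, Pi.single_eq_of_ne (Ne.symm hγ)]
      rfl
  · intro v γ _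
    exact hWrefine γ (e.symm v γ).2
  · intro α a ha v
    have key : ∀ γ w, w ∈ W γ →
        (LinearMap.pi (fun γ => (W γ).subtype ∘ₗ
          (DirectSum.component F Γ _ γ) ∘ₗ e.symm.toLinearMap) : V →ₗ[F] Γ → V) w
          = Pi.single γ w := by
      intro γ w hw
      funext γ'
      show ((e.symm w) γ' : V) = (Pi.single γ w : Γ → V) γ'
      by_cases hγ : γ = γ'
      · subst hγ
        rw [hW.ofBijective_coeLinearMap_of_mem hw, Pi.single_eq_same]
      · rw [hW.ofBijective_coeLinearMap_of_mem_ne hγ hw, Pi.single_eq_of_ne (Ne.symm hγ)]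
        rfl
    set Φ := (LinearMap.pi (fun γ => (W γ).subtype ∘ₗ
          (DirectSum.component F Γ _ γ) ∘ₗ e.symm.toLinearMap) : V →ₗ[F] Γ → V)
    have : ∀ v ∈ (⊤ : Submodule F V), Φ (ρ a v) = fun γ : Γ => ρ a (Φ v (γ - α)) := by
      rw [← hW.submodule_iSup_eq_top]
      intro v hv
      induction hv using Submodule.iSup_induction' with
      | mem β w hw =>
        rw [key β w hw, key (α + β) (ρ a w) (hWcompat α a ha β w hw)]
        funext γ
        by_cases hγ : γ = α + β
        · subst hγ
          rw [Pi.single_eq_same, add_sub_cancel_left, Pi.single_eq_same]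
        · rw [Pi.single_eq_of_ne hγ, Pi.single_eq_of_ne, map_zero]
          intro hc
          exact hγ (by rw [← hc]; abel)
      | zero => simp only [map_zero]; funext γ; simp
      | add w₁ h₁ w₂ h₂ ih₁ ih₂ =>
        rw [map_add, map_add, ih₁, ih₂]
        funext γ
        simp [Pi.add_apply, map_add]
    exact this v trivial
end

section
/- Every Γ-graded maximal-quotient realization: for a Γ-graded algebra A, every finite-dimensional Γ-graded irreducible A-module W is isomorphic (as a Γ-graded module) to a graded quotient of the loop module L_H(V) of some Γ/H-graded irreducible submodule V of W (with W regarded as Γ/H-graded). -/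
section Aux

variable {F : Type*} [Field F] {Γ : Type*} [AddCommGroup Γ] [Fintype Γ] [DecidableEq Γ]
  {W : Type*} [AddCommGroup W] [Module F W]
  (𝒲 : Γ → Submodule F W) (h𝒲 : DirectSum.IsInternal 𝒲)

/-- Projection onto the `γ`-component of an internal direct sum. -/
noncomputable def gproj (γ : Γ) : W →ₗ[F] W :=
  (𝒲 γ).subtype ∘ₗ (DirectSum.component F Γ (fun γ => 𝒲 γ) γ) ∘ₗ
    ((LinearEquiv.ofBijective (DirectSum.coeLinearMap 𝒲) h𝒲).symm : W →ₗ[F] (DirectSum Γ fun g => 𝒲 g))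

theorem gproj_mem (γ : Γ) (w : W) : gproj 𝒲 h𝒲 γ w ∈ 𝒲 γ :=
  ((LinearEquiv.ofBijective (DirectSum.coeLinearMap 𝒲) h𝒲).symm w γ).2

theorem gproj_of_mem {γ : Γ} {w : W} (hw : w ∈ 𝒲 γ) : gproj 𝒲 h𝒲 γ w = w := by
  have := h𝒲.ofBijective_coeLinearMap_of_mem hw
  simp only [gproj, LinearMap.comp_apply]
  erw [this]
  rfl

theorem gproj_of_mem_ne {γ δ : Γ} (hne : δ ≠ γ) {w : W} (hw : w ∈ 𝒲 γ) :
    gproj 𝒲 h𝒲 δ w = 0 := by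
  have := h𝒲.ofBijective_coeLinearMap_of_mem_ne hne.symm hw
  simp only [gproj, LinearMap.comp_apply]
  erw [this]
  rfl

theorem gproj_sum (w : W) : ∑ γ, gproj 𝒲 h𝒲 γ w = w := by
  have key : ∀ x : (DirectSum Γ fun g => 𝒲 g), (∑ γ, ((x γ : W))) = DirectSum.coeLinearMap 𝒲 x := by
    intro x
    conv_rhs => rw [← DirectSum.sum_univ_of x]
    rw [map_sum]
    simp [DirectSum.coeLinearMap_of]
  have h2 := key ((LinearEquiv.ofBijective (DirectSum.coeLinearMap 𝒲) h𝒲).symm w)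
  calc ∑ γ, gproj 𝒲 h𝒲 γ w
      = DirectSum.coeLinearMap 𝒲 ((LinearEquiv.ofBijective (DirectSum.coeLinearMap 𝒲) h𝒲).symm w) := h2
    _ = w := by
        exact (LinearEquiv.ofBijective (DirectSum.coeLinearMap 𝒲) h𝒲).apply_symm_apply w

end Aux



/-- Every finite-dimensional `Γ`-graded irreducible module `W`
over a `Γ`-graded algebra `A` is (isomorphic as a `Γ`-graded module to) a
graded quotient of the loop module `L_H(V)` of some `Γ/H`-graded irreducible
submodule `V` of `W` (with `W` regarded as `Γ/H`-graded).  This is expressed by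
exhibiting a degree-`0` intertwiner `Φ` from the loop module of `V` onto `W`
(so that `W ≅ L_H(V)/ker Φ` as graded modules).  The loop module is modelled
as the functions `Γ → W` whose value at `γ` lies in `V ∩ W_{γ+H}`, with a
homogeneous `a ∈ A_α` acting by `(a·f)(γ) = a·f(γ-α)`. -/
theorem stmt4 {F : Type*} [Field F] {Γ : Type*} [AddCommGroup Γ] [Finite Γ]
    [DecidableEq Γ] {H : AddSubgroup Γ} [DecidableEq (Γ ⧸ H)]
    {A : Type*} [Ring A] [Algebra F A] (𝒜 : Γ → Submodule F A)
    (h𝒜 : ∀ α β : Γ, ∀ a ∈ 𝒜 α, ∀ b ∈ 𝒜 β, a * b ∈ 𝒜 (α + β))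
    {W : Type*} [AddCommGroup W] [Module F W] [FiniteDimensional F W]
    (ρ : A →ₐ[F] Module.End F W)
    (𝒲 : Γ → Submodule F W) (h𝒲 : DirectSum.IsInternal 𝒲)
    (hcompat : ∀ (α : Γ) (a : A), a ∈ 𝒜 α → ∀ (γ : Γ) (w : W), w ∈ 𝒲 γ →
      ρ a w ∈ 𝒲 (α + γ))
    (hnz : (⊤ : Submodule F W) ≠ ⊥)
    -- `W` is `Γ`-graded irreducible
    (hirr : ∀ U : Submodule F W,
      (∀ (α : Γ) (a : A), a ∈ 𝒜 α → ∀ w ∈ U, ρ a w ∈ U) →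
      (U = ⨆ γ : Γ, U ⊓ 𝒲 γ) → U = ⊥ ∨ U = ⊤) :
    -- the natural `Γ/H`-grading on `W`
    let ℬ : Γ ⧸ H → Submodule F W :=
      fun Λ => ⨆ γ ∈ {g : Γ | (QuotientAddGroup.mk g : Γ ⧸ H) = Λ}, 𝒲 γ
    ∃ Vsub : Submodule F W,
      Vsub ≠ ⊥ ∧
      (∀ (α : Γ) (a : A), a ∈ 𝒜 α → ∀ w ∈ Vsub, ρ a w ∈ Vsub) ∧
      (Vsub = ⨆ Λ : Γ ⧸ H, Vsub ⊓ ℬ Λ) ∧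
      -- `Vsub` is `Γ/H`-graded irreducible
      (∀ U : Submodule F W, U ≤ Vsub →
        (∀ (α : Γ) (a : A), a ∈ 𝒜 α → ∀ w ∈ U, ρ a w ∈ U) →
        (U = ⨆ Λ : Γ ⧸ H, U ⊓ ℬ Λ) → U = ⊥ ∨ U = Vsub) ∧
      -- `W` is a graded quotient of the loop module of `Vsub`:
      -- there is a surjective degree-0 intertwiner from `L_H(Vsub)` onto `W`
      ∃ Φ : (Γ → W) →ₗ[F] W,
        Submodule.map Φ (Submodule.pi Set.univ
          (fun γ : Γ => Vsub ⊓ ℬ (QuotientAddGroup.mk γ))) = ⊤ ∧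
        (∀ γ₀ : Γ, ∀ f ∈ Submodule.pi Set.univ
            (fun γ : Γ => if γ = γ₀ then Vsub ⊓ ℬ (QuotientAddGroup.mk γ) else ⊥),
          Φ f ∈ 𝒲 γ₀) ∧
        (∀ (α : Γ) (a : A), a ∈ 𝒜 α → ∀ f ∈ Submodule.pi Set.univ
            (fun γ : Γ => Vsub ⊓ ℬ (QuotientAddGroup.mk γ)),
          Φ (fun γ : Γ => ρ a (f (γ - α))) = ρ a (Φ f)) := by
  intro ℬ
  classical
  cases nonempty_fintype Γ
  have hB : ∀ Λ : Γ ⧸ H,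
      ℬ Λ = ⨆ γ ∈ {g : Γ | (QuotientAddGroup.mk g : Γ ⧸ H) = Λ}, 𝒲 γ := fun _ => rfl
  set P : Γ → W →ₗ[F] W := fun γ => gproj 𝒲 h𝒲 γ with hPdef
  have Pmem : ∀ (γ : Γ) (w : W), P γ w ∈ 𝒲 γ := fun γ w => gproj_mem 𝒲 h𝒲 γ w
  have Peq : ∀ {γ : Γ} {w : W}, w ∈ 𝒲 γ → P γ w = w := fun h => gproj_of_mem 𝒲 h𝒲 h
  have Pne : ∀ {γ δ : Γ}, δ ≠ γ → ∀ {w : W}, w ∈ 𝒲 γ → P δ w = 0 :=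
    fun {γ δ} hne {w} hw => gproj_of_mem_ne 𝒲 h𝒲 hne hw
  have Psum : ∀ w : W, ∑ γ, P γ w = w := gproj_sum 𝒲 h𝒲
  -- basic facts about the coarsened grading ℬ
  have hWB : ∀ γ : Γ, 𝒲 γ ≤ ℬ (QuotientAddGroup.mk γ) := by
    intro γ
    rw [hB]
    exact le_iSup₂ (f := fun g (_ : g ∈ {g : Γ |
      (QuotientAddGroup.mk g : Γ ⧸ H) = QuotientAddGroup.mk γ}) => 𝒲 g) γ rfl
  have hBker : ∀ (Λ : Γ ⧸ H) (δ : Γ), (QuotientAddGroup.mk δ : Γ ⧸ H) ≠ Λ →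
      ∀ w ∈ ℬ Λ, P δ w = 0 := by
    intro Λ δ hδ w hw
    have hle : ℬ Λ ≤ LinearMap.ker (P δ) := by
      rw [hB]
      refine iSup₂_le fun γ hγ => ?_
      intro w' hw'
      have hne : δ ≠ γ := fun h => hδ (h ▸ hγ)
      simpa [LinearMap.mem_ker] using Pne hne hw'
    simpa [LinearMap.mem_ker] using hle hw
  have hBmap : ∀ (α : Γ) (a : A), a ∈ 𝒜 α → ∀ (Λ : Γ ⧸ H), ∀ w ∈ ℬ Λ,
      ρ a w ∈ ℬ (QuotientAddGroup.mk α + Λ) := by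
    intro α a ha Λ w hw
    have hle : ℬ Λ ≤ Submodule.comap (ρ a) (ℬ (QuotientAddGroup.mk α + Λ)) := by
      rw [hB]
      refine iSup₂_le fun γ hγ => ?_
      intro w' hw'
      simp only [Submodule.mem_comap]
      have h1 : ρ a w' ∈ 𝒲 (α + γ) := hcompat α a ha γ w' hw'
      have h2 : (QuotientAddGroup.mk (α + γ) : Γ ⧸ H)
          = QuotientAddGroup.mk α + Λ := by
        rw [QuotientAddGroup.mk_add, hγ]
      exact h2 ▸ hWB (α + γ) h1
    exact hle hw
  -- commutation of projections with homogeneous action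
  have Pcomm : ∀ (α : Γ) (a : A), a ∈ 𝒜 α → ∀ (δ : Γ) (w : W),
      P (α + δ) (ρ a w) = ρ a (P δ w) := by
    intro α a ha δ w
    conv_lhs => rw [← Psum w, map_sum, map_sum]
    rw [Finset.sum_eq_single δ]
    · exact Peq (hcompat α a ha δ (P δ w) (Pmem δ w))
    · intro γ _ hγ
      exact Pne (fun h => hγ (add_left_cancel h).symm) (hcompat α a ha γ (P γ w) (Pmem γ w))
    · simp
  -- top is ℬ-graded
  have gradedTop : (⊤ : Submodule F W) = ⨆ Λ : Γ ⧸ H, (⊤ : Submodule F W) ⊓ ℬ Λ := by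
    refine le_antisymm ?_ le_top
    simp only [top_inf_eq]
    conv_lhs => rw [← h𝒲.submodule_iSup_eq_top]
    exact iSup_le fun γ => (hWB γ).trans (le_iSup ℬ (QuotientAddGroup.mk γ : Γ ⧸ H))
  -- choose a minimal nonzero invariant ℬ-graded submodule
  have hex : ∃ n : ℕ, ∃ V : Submodule F W,
      (V ≠ ⊥ ∧ (∀ (α : Γ) (a : A), a ∈ 𝒜 α → ∀ w ∈ V, ρ a w ∈ V) ∧
        V = ⨆ Λ : Γ ⧸ H, V ⊓ ℬ Λ) ∧ Module.finrank F V = n :=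
    ⟨_, ⊤, ⟨hnz, fun α a _ w _ => Submodule.mem_top, gradedTop⟩, rfl⟩
  obtain ⟨V, ⟨hVne, hVinv, hVgr⟩, hVrank⟩ := Nat.find_spec hex
  have hmin : ∀ U : Submodule F W, U ≠ ⊥ →
      (∀ (α : Γ) (a : A), a ∈ 𝒜 α → ∀ w ∈ U, ρ a w ∈ U) →
      (U = ⨆ Λ : Γ ⧸ H, U ⊓ ℬ Λ) → Nat.find hex ≤ Module.finrank F U :=
    fun U h1 h2 h3 => Nat.find_min' hex ⟨U, ⟨h1, h2, h3⟩, rfl⟩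
  -- the intertwiner
  set Φ : (Γ → W) →ₗ[F] W := ∑ γ : Γ, (P γ) ∘ₗ (LinearMap.proj γ) with hΦdef
  have Φapp : ∀ f : Γ → W, Φ f = ∑ γ, P γ (f γ) := by
    intro f
    simp [hΦdef, LinearMap.sum_apply]
  have hΦint : ∀ (α : Γ) (a : A), a ∈ 𝒜 α → ∀ f : Γ → W,
      Φ (fun γ => ρ a (f (γ - α))) = ρ a (Φ f) := by
    intro α a ha f
    rw [Φapp, Φapp, map_sum,
      ← Equiv.sum_comp (Equiv.addLeft α) (fun γ => P γ (ρ a (f (γ - α))))]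
    refine Finset.sum_congr rfl fun δ _ => ?_
    simp only [Equiv.coe_addLeft, add_sub_cancel_left]
    exact Pcomm α a ha δ (f δ)
  refine ⟨V, hVne, hVinv, hVgr, ?_, Φ, ?_, ?_, fun α a ha f _ => hΦint α a ha f⟩
  · -- irreducibility of V among ℬ-graded invariant submodules
    intro U hle hinvU hgrU
    by_cases hU : U = ⊥
    · exact Or.inl hU
    · right
      refine Submodule.eq_of_le_of_finrank_le hle ?_
      rw [hVrank]
      exact hmin U hU hinvU hgrU
  · -- surjectivity onto W
    set U : Submodule F W := Submodule.map Φ (Submodule.pi Set.univ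
      (fun γ : Γ => V ⊓ ℬ (QuotientAddGroup.mk γ))) with hUdef
    have hUinv : ∀ (α : Γ) (a : A), a ∈ 𝒜 α → ∀ u ∈ U, ρ a u ∈ U := by
      intro α a ha u hu
      obtain ⟨f, hf, rfl⟩ := hu
      refine ⟨fun γ => ρ a (f (γ - α)), ?_, hΦint α a ha f⟩
      intro γ _
      have hfm := hf (γ - α) (Set.mem_univ _)
      refine ⟨hVinv α a ha _ hfm.1, ?_⟩
      have h2 : (QuotientAddGroup.mk α + QuotientAddGroup.mk (γ - α) : Γ ⧸ H)
          = QuotientAddGroup.mk γ := by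
        rw [← QuotientAddGroup.mk_add, add_sub_cancel]
      exact h2 ▸ hBmap α a ha _ _ hfm.2
    have hUgr : U = ⨆ γ : Γ, U ⊓ 𝒲 γ := by
      refine le_antisymm ?_ (iSup_le fun γ => inf_le_left)
      intro u hu
      obtain ⟨f, hf, rfl⟩ := hu
      rw [Φapp]
      refine Submodule.sum_mem _ fun γ _ => Submodule.mem_iSup_of_mem γ ⟨?_, Pmem γ (f γ)⟩
      refine ⟨fun δ => if δ = γ then f γ else 0, ?_, ?_⟩
      · intro δ _
        by_cases h : δ = γ
        · subst h; simpa using hf δ (Set.mem_univ δ)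
        · simp [h]
      · rw [Φapp, Finset.sum_eq_single γ]
        · simp
        · intro δ _ h; simp [h]
        · simp
    have hUne : U ≠ ⊥ := by
      have hΛ : ∃ Λ : Γ ⧸ H, V ⊓ ℬ Λ ≠ ⊥ := by
        by_contra h
        push_neg at h
        exact hVne (hVgr.trans (by simp [h]))
      obtain ⟨Λ, hΛ⟩ := hΛ
      obtain ⟨v, hv, hvne⟩ := Submodule.exists_mem_ne_zero_of_ne_bot hΛ
      have hδ : ∃ δ : Γ, P δ v ≠ 0 := by
        by_contra h
        push_neg at h
        apply hvne
        rw [← Psum v]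
        simp [h]
      obtain ⟨δ, hδ⟩ := hδ
      have hmkδ : (QuotientAddGroup.mk δ : Γ ⧸ H) = Λ := by
        by_contra h
        exact hδ (hBker Λ δ h v hv.2)
      intro hbot
      apply hδ
      have hmem : Φ (fun ι => if ι = δ then v else 0) ∈ U := by
        refine ⟨fun ι => if ι = δ then v else 0, ?_, rfl⟩
        intro ι _
        by_cases h : ι = δ
        · subst h; simpa [hmkδ] using hv
        · simp [h]
      rw [hbot, Submodule.mem_bot, Φapp, Finset.sum_eq_single δ] at hmem
      · simpa using hmem
      · intro γ _ h; simp [h]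
      · simp
    rcases hirr U hUinv hUgr with h | h
    · exact absurd h hUne
    · exact h
  · -- degree condition
    intro γ₀ f hf
    have h0 : ∀ γ : Γ, γ ≠ γ₀ → f γ = 0 := by
      intro γ h
      have := hf γ (Set.mem_univ γ)
      simpa only [if_neg h, SetLike.mem_coe, Submodule.mem_bot] using this
    rw [Φapp, Finset.sum_eq_single γ₀]
    · exact Pmem γ₀ (f γ₀)
    · intro γ _ h; rw [h0 γ h]; simp
    · simp
end

section
/- If a Γ/H-graded module V over a Γ-graded algebra A admits a Γ-grading refining its Γ/H-grading, then for every character f : Γ → F^× with f|_H = 1, the twisted module V^f is isomorphic to V as a Γ/H-graded A-module, via the map sending a Γ-homogeneous element w of degree γ to f(γ)·w. -/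
/-- If a `Γ/H`-graded module `V` over a `Γ`-graded algebra `A`
admits a compatible `Γ`-grading `W` refining its `Γ/H`-grading, then for every
character `f : Γ → F^×` with `f|_H = 1`, the twisted module `V^f` is isomorphic
to `V` as a `Γ/H`-graded `A`-module, via the map sending a `Γ`-homogeneous
element `w` of degree `γ` to `f(γ) • w` (an intertwiner `V → V^f` homogeneous
of degree `0`). -/
theorem stmt8 {F : Type*} [Field F] {Γ : Type*} [AddCommGroup Γ] [DecidableEq Γ]
    {H : AddSubgroup Γ} [DecidableEq (Γ ⧸ H)]
    {A : Type*} [Ring A] [Algebra F A] (𝒜 : Γ → Submodule F A)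
    (h𝒜 : ∀ α β : Γ, ∀ a ∈ 𝒜 α, ∀ b ∈ 𝒜 β, a * b ∈ 𝒜 (α + β))
    {V : Type*} [AddCommGroup V] [Module F V]
    (ρ : A →ₐ[F] Module.End F V)
    (ℬ : Γ ⧸ H → Submodule F V) (hℬ : DirectSum.IsInternal ℬ)
    (hcompat : ∀ (α : Γ) (a : A), a ∈ 𝒜 α → ∀ (Λ : Γ ⧸ H) (v : V), v ∈ ℬ Λ →
      ρ a v ∈ ℬ ((QuotientAddGroup.mk α : Γ ⧸ H) + Λ))
    (W : Γ → Submodule F V) (hW : DirectSum.IsInternal W)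
    (hWrefine : ∀ γ : Γ, W γ ≤ ℬ (QuotientAddGroup.mk γ))
    (hWcompat : ∀ (α : Γ) (a : A), a ∈ 𝒜 α → ∀ (γ : Γ) (v : V), v ∈ W γ →
      ρ a v ∈ W (α + γ))
    (f : Γ → Fˣ) (hf : ∀ α β : Γ, f (α + β) = f α * f β)
    (hfH : ∀ η ∈ H, f η = 1) :
    ∃ Φ : V ≃ₗ[F] V,
      (∀ (γ : Γ) (w : V), w ∈ W γ → Φ w = (f γ : F) • w) ∧
      -- `Φ` is homogeneous of degree 0 for the `Γ/H`-grading
      (∀ (Λ : Γ ⧸ H) (v : V), v ∈ ℬ Λ → Φ v ∈ ℬ Λ) ∧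
      -- `Φ : V → V^f` intertwines the action with the twisted action
      (∀ (α : Γ) (a : A), a ∈ 𝒜 α → ∀ v : V,
        Φ (ρ a v) = (f α : F) • ρ a (Φ v)) := by
  classical
  -- the coordinate equivalence
  let e : (DirectSum Γ (fun γ => W γ)) ≃ₗ[F] V := LinearEquiv.ofBijective (DirectSum.coeLinearMap W) hW
  let m : (DirectSum Γ (fun γ => W γ)) ≃ₗ[F] (DirectSum Γ (fun γ => W γ)) :=
    DFinsupp.mapRange.linearEquiv fun γ => LinearEquiv.smulOfUnit (f γ)
  let Φ : V ≃ₗ[F] V := e.symm.trans (m.trans e)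
  have key : ∀ (γ : Γ) (w : V), w ∈ W γ → Φ w = (f γ : F) • w := by
    intro γ w hw
    have h1 : e (DirectSum.of (fun γ => W γ) γ ⟨w, hw⟩) = w :=
      DirectSum.coeLinearMap_of W γ ⟨w, hw⟩
    have h2 : e.symm w = DirectSum.of (fun γ => W γ) γ ⟨w, hw⟩ :=
      (LinearEquiv.symm_apply_eq e).mpr h1.symm
    show e (m (e.symm w)) = (f γ : F) • w
    rw [h2]
    have h3 : m (DirectSum.of (fun γ => W γ) γ ⟨w, hw⟩)
        = DirectSum.of (fun γ => W γ) γ ((f γ : F) • (⟨w, hw⟩ : W γ)) := by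
      show ((DFinsupp.mapRange.linearEquiv fun γ => LinearEquiv.smulOfUnit (f γ)) :
          (Π₀ γ, W γ) → Π₀ γ, W γ) (DFinsupp.single γ ⟨w, hw⟩)
        = DFinsupp.single γ ((f γ : F) • (⟨w, hw⟩ : W γ))
      erw [DFinsupp.mapRange.linearEquiv_apply, DFinsupp.mapRange_single]
      rfl
    rw [h3]
    show DirectSum.coeLinearMap W _ = _
    rw [DirectSum.coeLinearMap_of]
    rfl
  refine ⟨Φ, key, ?_, ?_⟩
  · -- homogeneity: first show ℬ Λ ≤ ⨆ over coset of W
    have hBT : ∀ Λ : Γ ⧸ H, ℬ Λ ≤ ⨆ γ : {γ : Γ // (QuotientAddGroup.mk γ : Γ ⧸ H) = Λ}, W γ := by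
      intro Λ
      set T : Γ ⧸ H → Submodule F V :=
        fun Λ => ⨆ γ : {γ : Γ // (QuotientAddGroup.mk γ : Γ ⧸ H) = Λ}, W γ with hT
      have hTB : ∀ Λ, T Λ ≤ ℬ Λ := by
        intro Λ
        refine iSup_le ?_
        rintro ⟨γ, rfl⟩
        exact hWrefine γ
      have htop : (⨆ Λ, T Λ) = ⊤ := by
        rw [eq_top_iff, ← hW.submodule_iSup_eq_top]
        refine iSup_le fun γ => ?_
        exact le_iSup_of_le (QuotientAddGroup.mk γ) (le_iSup_of_le ⟨γ, rfl⟩ le_rfl)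
      have hsup : (⨆ Λ' , T Λ') ≤ T Λ ⊔ ⨆ Λ' ≠ Λ, ℬ Λ' := by
        refine iSup_le fun Λ' => ?_
        by_cases h : Λ' = Λ
        · exact h ▸ le_sup_left
        · exact le_sup_of_le_right <| le_trans (hTB Λ') (le_iSup₂_of_le Λ' h le_rfl)
      have hdisj : Disjoint (ℬ Λ) (⨆ Λ' ≠ Λ, ℬ Λ') := hℬ.submodule_iSupIndep Λ
      calc ℬ Λ = ℬ Λ ⊓ ⨆ Λ', T Λ' := by rw [htop, inf_top_eq]
        _ ≤ ℬ Λ ⊓ (T Λ ⊔ ⨆ Λ' ≠ Λ, ℬ Λ') := inf_le_inf_left _ hsup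
        _ = T Λ ⊔ (ℬ Λ ⊓ ⨆ Λ' ≠ Λ, ℬ Λ') := by
            rw [inf_comm, sup_inf_assoc_of_le _ (hTB Λ), inf_comm]
        _ = T Λ := by rw [hdisj.eq_bot, sup_bot_eq]
    intro Λ v hv
    have hv' := hBT Λ hv
    refine Submodule.iSup_induction _ (motive := fun x => Φ x ∈ ℬ Λ) hv' ?_ (by simp) ?_
    · rintro ⟨γ, rfl⟩ x hx
      rw [key γ x hx]
      exact hWrefine γ (Submodule.smul_mem _ _ hx)
    · intro x y hx hy
      rw [map_add]; exact add_mem hx hy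
  · intro α a ha v
    have hv : v ∈ ⨆ γ, W γ := by rw [hW.submodule_iSup_eq_top]; trivial
    refine Submodule.iSup_induction _
      (motive := fun v => Φ (ρ a v) = (f α : F) • ρ a (Φ v)) hv ?_ (by simp) ?_
    · intro γ x hx
      have h1 : ρ a x ∈ W (α + γ) := hWcompat α a ha γ x hx
      rw [key _ _ h1, key γ x hx, map_smul, hf]
      simp [smul_smul, mul_comm]
    · intro x y hx hy
      simp only [map_add, hx, hy, smul_add]
end

section
/- Let V be a finite-dimensional Γ/H-graded irreducible module over a Γ-graded algebra A. Then the loop module L_H(V) is completely reducible as a Γ-graded module: for any Γ-graded irreducible submodule W ⊆ L_H(V), there exists a subset K ⊆ H such that L_H(V) = ⊕_{h∈K} W^{+h}. -/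
section aux

lemma stmt12_proj_stable_of_graded {F V : Type*} [Field F] [AddCommGroup V] [Module F V]
    {Γ : Type*} [Fintype Γ] [DecidableEq Γ] (B : Γ → Submodule F V)
    (U : Submodule F (Γ → V))
    (hgr : U = ⨆ γ₀ : Γ, U ⊓ Submodule.pi Set.univ
      (fun γ => if γ = γ₀ then B γ else ⊥))
    (γ₀ : Γ) (g : Γ → V) (hg : g ∈ U) :
    (fun γ => if γ = γ₀ then g γ else 0) ∈ U := by
  have hg' : g ∈ ⨆ γ₀ : Γ, U ⊓ Submodule.pi Set.univ
      (fun γ => if γ = γ₀ then B γ else ⊥) := hgr ▸ hg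
  refine Submodule.iSup_induction _ (motive := fun x => ∀ γ₁ : Γ,
      (fun γ => if γ = γ₁ then x γ else 0) ∈ U) hg' ?_ ?_ ?_ γ₀
  · rintro γ' x hx γ₁
    obtain ⟨hxU, hxC⟩ := Submodule.mem_inf.mp hx
    have hsupp : ∀ γ, γ ≠ γ' → x γ = 0 := by
      intro γ hγ
      have := hxC γ (Set.mem_univ γ)
      simp only [if_neg hγ, Submodule.mem_bot] at this
      exact this
    by_cases h : γ₁ = γ'
    · subst h
      have : (fun γ => if γ = γ₁ then x γ else 0) = x := by
        funext γ
        by_cases hγ : γ = γ₁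
        · simp [hγ]
        · simp [hγ, hsupp γ hγ]
      rw [this]; exact hxU
    · have : (fun γ => if γ = γ₁ then x γ else 0) = (0 : Γ → V) := by
        funext γ
        by_cases hγ : γ = γ₁
        · subst hγ; simp [hsupp _ h]
        · simp [hγ]
      rw [this]; exact U.zero_mem
  · intro γ₁
    have : (fun γ => if γ = γ₁ then (0 : Γ → V) γ else 0) = (0 : Γ → V) := by
      funext γ; by_cases hγ : γ = γ₁ <;> simp [hγ]
    rw [this]; exact U.zero_mem
  · intro x y hx hy γ₁
    have : (fun γ => if γ = γ₁ then (x + y) γ else 0)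
        = (fun γ => if γ = γ₁ then x γ else 0) + (fun γ => if γ = γ₁ then y γ else 0) := by
      funext γ; by_cases hγ : γ = γ₁ <;> simp [hγ]
    rw [this]; exact U.add_mem (hx γ₁) (hy γ₁)

lemma stmt12_graded_of_proj_stable {F V : Type*} [Field F] [AddCommGroup V] [Module F V]
    {Γ : Type*} [Fintype Γ] [DecidableEq Γ] (B : Γ → Submodule F V)
    (U : Submodule F (Γ → V))
    (hle : U ≤ Submodule.pi Set.univ B)
    (hst : ∀ γ₀ : Γ, ∀ g ∈ U, (fun γ => if γ = γ₀ then g γ else 0) ∈ U) :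
    U = ⨆ γ₀ : Γ, U ⊓ Submodule.pi Set.univ
      (fun γ => if γ = γ₀ then B γ else ⊥) := by
  refine le_antisymm ?_ (iSup_le fun γ₀ => inf_le_left)
  intro g hg
  have hrep : g = ∑ γ₀ : Γ, (fun γ => if γ = γ₀ then g γ else 0) := by
    funext γ
    simp [Finset.sum_apply, Finset.sum_ite_eq]
  rw [hrep]
  refine Submodule.sum_mem _ fun γ₀ _ => ?_
  refine Submodule.mem_iSup_of_mem γ₀ (Submodule.mem_inf.mpr ⟨hst γ₀ g hg, ?_⟩)
  intro γ _
  by_cases hγ : γ = γ₀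
  · simp only [if_pos hγ]
    exact hle hg γ (Set.mem_univ γ)
  · simp [hγ]

lemma stmt12_selection {F M : Type*} [Field F] [AddCommGroup M] [Module F M]
    {ι : Type*} [DecidableEq ι] (f : ι → Submodule F M)
    (Good : Submodule F M → Prop)
    (hbot : Good ⊥) (hsup : ∀ U U', Good U → Good U' → Good (U ⊔ U'))
    (hinf : ∀ U U', Good U → Good U' → Good (U ⊓ U'))
    (s : Finset ι) (hf : ∀ i ∈ s, Good (f i))
    (hsimple : ∀ i ∈ s, ∀ U, Good U → U ≤ f i → U = ⊥ ∨ U = f i) :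
    ∃ K ⊆ s, (∀ x ∈ K, f x ⊓ (K.erase x).sup f = ⊥) ∧ K.sup f = s.sup f := by
  induction s using Finset.induction_on with
  | empty => exact ⟨∅, le_refl _, by simp, rfl⟩
  | @insert a s ha ih =>
    obtain ⟨K, hKs, hind, hKsup⟩ := ih
      (fun i hi => hf i (Finset.mem_insert_of_mem hi))
      (fun i hi => hsimple i (Finset.mem_insert_of_mem hi))
    have hGoodSup : ∀ t : Finset ι, t ⊆ s → Good (t.sup f) := by
      intro t ht
      exact Finset.sup_induction hbot (fun u hu u' hu' => hsup u u' hu hu') (fun i hi => hf i (Finset.mem_insert_of_mem (ht hi)))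
    by_cases hle : f a ≤ K.sup f
    · refine ⟨K, hKs.trans (Finset.subset_insert a s), hind, ?_⟩
      rw [Finset.sup_insert, hKsup, ← hKsup, sup_eq_right.mpr hle, hKsup]
    · have haK : a ∉ K := fun h => ha (hKs h)
      have hA : f a ⊓ K.sup f = ⊥ := by
        rcases hsimple a (Finset.mem_insert_self a s) (f a ⊓ K.sup f)
          (hinf _ _ (hf a (Finset.mem_insert_self a s)) (hGoodSup K hKs)) inf_le_left with h | h
        · exact h
        · exact absurd (inf_eq_left.mp h) hle
      refine ⟨insert a K, Finset.insert_subset_insert a hKs, ?_, ?_⟩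
      · intro x hx
        rcases Finset.mem_insert.mp hx with rfl | hxK
        · rw [Finset.erase_insert haK]; exact hA
        · have hax : a ≠ x := by rintro rfl; exact haK hxK
          rw [Finset.erase_insert_of_ne hax, Finset.sup_insert]
          rw [Submodule.eq_bot_iff]
          intro v hv
          obtain ⟨hvx, hv2⟩ := Submodule.mem_inf.mp hv
          obtain ⟨w, hw, t, ht, rfl⟩ := Submodule.mem_sup.mp hv2
          have hTle : (K.erase x).sup f ≤ K.sup f :=
            Finset.sup_mono (Finset.erase_subset x K)
          have hw2 : w ∈ K.sup f := by
            have : w = (w + t) - t := by abel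
            rw [this]
            exact Submodule.sub_mem _ (Finset.le_sup hxK (f := f) hvx) (hTle ht)
          have hw0 : w = 0 := by
            have := hA ▸ Submodule.mem_inf.mpr ⟨hw, hw2⟩
            simpa using this
          subst hw0
          have : t ∈ f x ⊓ (K.erase x).sup f := by
            refine Submodule.mem_inf.mpr ⟨?_, ht⟩
            simpa using hvx
          rw [hind x hxK] at this
          simpa using this
      · rw [Finset.sup_insert, Finset.sup_insert, hKsup]

end aux


/-- Let `H ≤ Γ` be a (finite) simple subgroup, `F` a field
with a primitive `|Γ|`-th root of unity, and `V` a finite-dimensional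
`Γ/H`-graded irreducible module over a `Γ`-graded algebra `A`.  Then the loop
module `L_H(V)` is completely reducible as a `Γ`-graded module: for any
`Γ`-graded irreducible submodule `W ⊆ L_H(V)`, there is a subset `K ⊆ H` with
`L_H(V) = ⊕_{h∈K} W^{+h}` (the parity shifts embedded via
`w ⊗ e_{γ+h} ↦ w ⊗ e_γ`, i.e. `g ↦ (γ ↦ g (γ + h))`). -/
theorem stmt12 {F : Type*} [Field F] {Γ : Type*} [AddCommGroup Γ] [Fintype Γ]
    [DecidableEq Γ] {H : AddSubgroup Γ} [DecidableEq (Γ ⧸ H)]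
    [IsSimpleAddGroup H]
    (hroot : ∃ ζ : F, IsPrimitiveRoot ζ (Fintype.card Γ))
    {A : Type*} [Ring A] [Algebra F A] (𝒜 : Γ → Submodule F A)
    (h𝒜 : ∀ α β : Γ, ∀ a ∈ 𝒜 α, ∀ b ∈ 𝒜 β, a * b ∈ 𝒜 (α + β))
    {V : Type*} [AddCommGroup V] [Module F V] [FiniteDimensional F V]
    (ρ : A →ₐ[F] Module.End F V)
    (ℬ : Γ ⧸ H → Submodule F V) (hℬ : DirectSum.IsInternal ℬ)
    (hcompat : ∀ (α : Γ) (a : A), a ∈ 𝒜 α → ∀ (Λ : Γ ⧸ H) (v : V), v ∈ ℬ Λ →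
      ρ a v ∈ ℬ ((QuotientAddGroup.mk α : Γ ⧸ H) + Λ))
    (hnz : (⊤ : Submodule F V) ≠ ⊥)
    -- `V` is `Γ/H`-graded irreducible
    (hirr : ∀ U : Submodule F V,
      (∀ (α : Γ) (a : A), a ∈ 𝒜 α → ∀ v ∈ U, ρ a v ∈ U) →
      (U = ⨆ Λ : Γ ⧸ H, U ⊓ ℬ Λ) → U = ⊥ ∨ U = ⊤)
    -- `W` is a `Γ`-graded irreducible submodule of the loop module
    (W : Submodule F (Γ → V))
    (hWle : W ≤ Submodule.pi Set.univ (fun γ : Γ => ℬ (QuotientAddGroup.mk γ)))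
    (hWact : ∀ (α : Γ) (a : A), a ∈ 𝒜 α → ∀ g ∈ W,
      (fun γ : Γ => ρ a (g (γ - α))) ∈ W)
    (hWgr : W = ⨆ γ₀ : Γ, W ⊓ Submodule.pi Set.univ
      (fun γ : Γ => if γ = γ₀ then ℬ (QuotientAddGroup.mk γ) else ⊥))
    (hWnz : W ≠ ⊥)
    (hWirr : ∀ U : Submodule F (Γ → V), U ≤ W →
      (∀ (α : Γ) (a : A), a ∈ 𝒜 α → ∀ g ∈ U,
        (fun γ : Γ => ρ a (g (γ - α))) ∈ U) →
      (U = ⨆ γ₀ : Γ, U ⊓ Submodule.pi Set.univ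
        (fun γ : Γ => if γ = γ₀ then ℬ (QuotientAddGroup.mk γ) else ⊥)) →
      U = ⊥ ∨ U = W) :
    ∃ K : Finset Γ, (↑K : Set Γ) ⊆ (H : Set Γ) ∧
      iSupIndep (fun h : K =>
        Submodule.map (LinearMap.funLeft F V (fun γ => γ + (h : Γ))) W) ∧
      (⨆ h ∈ K, Submodule.map (LinearMap.funLeft F V (fun γ => γ + h)) W) =
        Submodule.pi Set.univ (fun γ : Γ => ℬ (QuotientAddGroup.mk γ)) := by
  classical
  set L : Submodule F (Γ → V) :=
    Submodule.pi Set.univ (fun γ : Γ => ℬ (QuotientAddGroup.mk γ)) with hLdef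
  set σ : Γ → ((Γ → V) →ₗ[F] (Γ → V)) :=
    fun h => LinearMap.funLeft F V (fun γ => γ + h) with hσdef
  set Wsh : Γ → Submodule F (Γ → V) := fun h => Submodule.map (σ h) W with hWshdef
  have hσ_apply : ∀ (h : Γ) (g : Γ → V) (γ : Γ), σ h g γ = g (γ + h) := fun _ _ _ => rfl
  -- composition of shifts
  have hσ_comp : ∀ h k : Γ, (σ h).comp (σ k) = σ (h + k) := by
    intro h k
    apply LinearMap.ext; intro g; funext γ
    simp only [LinearMap.comp_apply, hσ_apply]
    rw [add_assoc]
  have hσ_zero : σ 0 = LinearMap.id := by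
    apply LinearMap.ext; intro g; funext γ
    simp [hσ_apply]
  have hmap_comp : ∀ (h k : Γ) (X : Submodule F (Γ → V)),
      Submodule.map (σ h) (Submodule.map (σ k) X) = Submodule.map (σ (h + k)) X := by
    intro h k X
    rw [← hσ_comp h k, ← Submodule.map_comp]
  -- cosets
  have hmk : ∀ (γ h : Γ), h ∈ H → (QuotientAddGroup.mk (γ + h) : Γ ⧸ H) = QuotientAddGroup.mk γ := by
    intro γ h hh
    rw [QuotientAddGroup.eq]
    have : -(γ + h) + γ = -h := by abel
    rw [this]
    exact H.neg_mem hh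
  -- the Good predicate: graded A-stable submodules of L
  set Good : Submodule F (Γ → V) → Prop := fun U =>
    U ≤ L ∧ (∀ (α : Γ) (a : A), a ∈ 𝒜 α → ∀ g ∈ U, (fun γ : Γ => ρ a (g (γ - α))) ∈ U) ∧
    (∀ γ₀ : Γ, ∀ g ∈ U, (fun γ : Γ => if γ = γ₀ then g γ else 0) ∈ U) with hGooddef
  have hGoodW : Good W := by
    refine ⟨hWle, hWact, ?_⟩
    intro γ₀ g hg
    exact stmt12_proj_stable_of_graded (fun γ => ℬ (QuotientAddGroup.mk γ)) W hWgr γ₀ g hg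
  have hGoodbot : Good ⊥ := by
    refine ⟨bot_le, ?_, ?_⟩
    · intro α a ha g hg
      rw [Submodule.mem_bot] at hg
      subst hg
      have : (fun γ : Γ => ρ a ((0 : Γ → V) (γ - α))) = (0 : Γ → V) := by
        funext γ; simp
      rw [this]; exact Submodule.zero_mem _
    · intro γ₀ g hg
      rw [Submodule.mem_bot] at hg
      subst hg
      have : (fun γ : Γ => if γ = γ₀ then (0 : Γ → V) γ else 0) = (0 : Γ → V) := by
        funext γ; simp
      rw [this]; exact Submodule.zero_mem _
  have hGoodsup : ∀ U U', Good U → Good U' → Good (U ⊔ U') := by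
    intro U U' ⟨h1, h2, h3⟩ ⟨h1', h2', h3'⟩
    refine ⟨sup_le h1 h1', ?_, ?_⟩
    · intro α a ha g hg
      obtain ⟨u, hu, u', hu', rfl⟩ := Submodule.mem_sup.mp hg
      have : (fun γ : Γ => ρ a ((u + u') (γ - α)))
          = (fun γ : Γ => ρ a (u (γ - α))) + (fun γ : Γ => ρ a (u' (γ - α))) := by
        funext γ; simp
      rw [this]
      exact Submodule.add_mem _ (le_sup_left (a := U) (b := U') (h2 α a ha u hu))
        (le_sup_right (a := U) (b := U') (h2' α a ha u' hu'))
    · intro γ₀ g hg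
      obtain ⟨u, hu, u', hu', rfl⟩ := Submodule.mem_sup.mp hg
      have : (fun γ : Γ => if γ = γ₀ then (u + u') γ else 0)
          = (fun γ : Γ => if γ = γ₀ then u γ else 0) + (fun γ : Γ => if γ = γ₀ then u' γ else 0) := by
        funext γ; by_cases hγ : γ = γ₀ <;> simp [hγ]
      rw [this]
      exact Submodule.add_mem _ (le_sup_left (a := U) (b := U') (h3 γ₀ u hu))
        (le_sup_right (a := U) (b := U') (h3' γ₀ u' hu'))
  have hGoodinf : ∀ U U', Good U → Good U' → Good (U ⊓ U') := by
    intro U U' ⟨h1, h2, h3⟩ ⟨h1', h2', h3'⟩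
    refine ⟨inf_le_left.trans h1, ?_, ?_⟩
    · intro α a ha g hg
      exact ⟨h2 α a ha g hg.1, h2' α a ha g hg.2⟩
    · intro γ₀ g hg
      exact ⟨h3 γ₀ g hg.1, h3' γ₀ g hg.2⟩
  -- commutation of shifts with the action and projections
  have hact_comm : ∀ (h α : Γ) (a : A) (g : Γ → V),
      (fun γ : Γ => ρ a ((σ h g) (γ - α))) = σ h (fun γ : Γ => ρ a (g (γ - α))) := by
    intro h α a g
    funext γ
    simp only [hσ_apply]
    congr 1
    congr 1
    abel
  have hproj_comm : ∀ (h γ₀ : Γ) (g : Γ → V),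
      (fun γ : Γ => if γ = γ₀ then (σ h g) γ else 0)
        = σ h (fun γ : Γ => if γ = γ₀ + h then g γ else 0) := by
    intro h γ₀ g
    funext γ
    simp only [hσ_apply]
    by_cases hγ : γ = γ₀
    · subst hγ; simp
    · rw [if_neg hγ, if_neg (fun e => hγ (by exact add_right_cancel e))]
  -- Good is stable under shifts
  have hGoodmap : ∀ h : Γ, h ∈ H → ∀ U, Good U → Good (Submodule.map (σ h) U) := by
    intro h hh U ⟨h1, h2, h3⟩
    refine ⟨?_, ?_, ?_⟩
    · rintro g ⟨u, hu, rfl⟩ γ _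
      rw [hσ_apply]
      have := h1 hu (γ + h) (Set.mem_univ _)
      simpa [hmk γ h hh] using this
    · rintro α a ha g ⟨u, hu, rfl⟩
      rw [hact_comm h α a u]
      exact Submodule.mem_map_of_mem (h2 α a ha u hu)
    · rintro γ₀ g ⟨u, hu, rfl⟩
      rw [hproj_comm h γ₀ u]
      exact Submodule.mem_map_of_mem (h3 (γ₀ + h) u hu)
  have hGoodWsh : ∀ h : Γ, h ∈ H → Good (Wsh h) := fun h hh => hGoodmap h hh W hGoodW
  -- simplicity of the shifts
  have hsimple : ∀ h : Γ, h ∈ H → ∀ U, Good U → U ≤ Wsh h → U = ⊥ ∨ U = Wsh h := by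
    intro h hh U hGU hUle
    obtain ⟨h1, h2, h3⟩ := hGU
    set U' : Submodule F (Γ → V) := Submodule.map (σ (-h)) U with hU'def
    have hback : Submodule.map (σ h) U' = U := by
      rw [hU'def, hmap_comp, add_neg_cancel, hσ_zero, Submodule.map_id]
    have hU'W : U' ≤ W := by
      rw [hU'def]
      calc Submodule.map (σ (-h)) U ≤ Submodule.map (σ (-h)) (Wsh h) :=
            Submodule.map_mono hUle
        _ = W := by rw [hWshdef]; rw [hmap_comp, neg_add_cancel, hσ_zero, Submodule.map_id]
    have hGU' : Good U' := hGoodmap (-h) (H.neg_mem hh) U ⟨h1, h2, h3⟩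
    obtain ⟨h1', h2', h3'⟩ := hGU'
    have hgr' : U' = ⨆ γ₀ : Γ, U' ⊓ Submodule.pi Set.univ
        (fun γ : Γ => if γ = γ₀ then ℬ (QuotientAddGroup.mk γ) else ⊥) :=
      stmt12_graded_of_proj_stable _ _ h1' h3'
    rcases hWirr U' hU'W h2' hgr' with hbot' | htop'
    · left
      rw [← hback, hbot', Submodule.map_bot]
    · right
      rw [← hback, htop', hWshdef]
  -- the sum of all H-shifts
  set s₀ : Finset Γ := Finset.univ.filter (fun h => h ∈ H) with hs₀def
  have hmem_s₀ : ∀ h : Γ, h ∈ s₀ ↔ h ∈ H := by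
    intro h; simp [hs₀def]
  set Uall : Submodule F (Γ → V) := s₀.sup Wsh with hUalldef
  have hWsh_le_Uall : ∀ h : Γ, h ∈ H → Wsh h ≤ Uall :=
    fun h hh => Finset.le_sup ((hmem_s₀ h).mpr hh)
  have hGoodUall : Good Uall :=
    Finset.sup_induction hGoodbot (fun u hu u' hu' => hGoodsup u u' hu hu')
      (fun i hi => hGoodWsh i ((hmem_s₀ i).mp hi))
  -- Uall is invariant under shifts from H
  have hUall_shift : ∀ h : Γ, h ∈ H → Submodule.map (σ h) Uall = Uall := by
    intro h hh
    apply le_antisymm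
    · rw [hUalldef, Finset.sup_eq_iSup, Submodule.map_iSup]
      refine iSup_le fun k => ?_
      rw [Submodule.map_iSup]
      refine iSup_le fun hk => ?_
      have hkH : k ∈ H := (hmem_s₀ k).mp hk
      rw [hWshdef]
      rw [hmap_comp]
      exact le_trans (hWsh_le_Uall (h + k) (H.add_mem hh hkH))
        (le_of_eq (by rw [hUalldef, Finset.sup_eq_iSup]))
    · intro g hg
      have : g ∈ Submodule.map (σ h) (Submodule.map (σ (-h)) Uall) := by
        rw [hmap_comp, add_neg_cancel, hσ_zero, Submodule.map_id]
        exact hg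
      obtain ⟨u, hu, rfl⟩ := this
      refine Submodule.mem_map_of_mem ?_
      -- u ∈ map (σ (-h)) Uall ≤ Uall
      revert hu
      rw [hUalldef, Finset.sup_eq_iSup, Submodule.map_iSup]
      refine fun hu => ?_
      have hle2 : (⨆ k, Submodule.map (σ (-h)) (⨆ (_ : k ∈ s₀), Wsh k)) ≤ s₀.sup Wsh := by
        refine iSup_le fun k => ?_
        rw [Submodule.map_iSup]
        refine iSup_le fun hk => ?_
        have hkH : k ∈ H := (hmem_s₀ k).mp hk
        rw [hWshdef, hmap_comp]
        exact hWsh_le_Uall (-h + k) (H.add_mem (H.neg_mem hh) hkH)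
      rw [← Finset.sup_eq_iSup]
      exact hle2 hu
  -- evaluation submodules
  set D : Γ → Submodule F V := fun γ => Submodule.map (LinearMap.proj γ) Uall with hDdef
  have hD_le : ∀ γ : Γ, D γ ≤ ℬ (QuotientAddGroup.mk γ) := by
    rintro γ v ⟨u, hu, rfl⟩
    exact hGoodUall.1 hu γ (Set.mem_univ γ)
  have hD_shift : ∀ (γ h : Γ), h ∈ H → D (γ + h) = D γ := by
    intro γ h hh
    have : (LinearMap.proj (γ + h) : (Γ → V) →ₗ[F] V) = (LinearMap.proj γ).comp (σ h) := by
      apply LinearMap.ext; intro g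
      simp [hσ_apply]
    rw [hDdef]
    simp only
    rw [this, Submodule.map_comp, hUall_shift h hh]
  -- the span of all evaluations
  set T : Submodule F V := ⨆ γ : Γ, D γ with hTdef
  have hD_le_T : ∀ γ : Γ, D γ ≤ T := fun γ => le_iSup D γ
  have hT_act : ∀ (α : Γ) (a : A), a ∈ 𝒜 α → ∀ v ∈ T, ρ a v ∈ T := by
    intro α a ha v hv
    refine Submodule.iSup_induction D (motive := fun w => ρ a w ∈ T) hv ?_ (by simp) ?_
    · rintro γ w ⟨u, hu, rfl⟩
      simp only [LinearMap.proj_apply]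
      have hkey : ρ a (u γ) = (fun γ' : Γ => ρ a (u (γ' - α))) (γ + α) := by
        simp
      rw [hkey]
      exact hD_le_T (γ + α) ⟨_, hGoodUall.2.1 α a ha u hu, rfl⟩
    · intro x y hx hy
      rw [map_add]
      exact Submodule.add_mem _ hx hy
  have hT_gr : T = ⨆ Λ : Γ ⧸ H, T ⊓ ℬ Λ := by
    refine le_antisymm ?_ (iSup_le fun Λ => inf_le_left)
    refine iSup_le fun γ => ?_
    exact le_trans (le_inf (hD_le_T γ) (hD_le γ))
      (le_iSup (fun Λ => T ⊓ ℬ Λ) (QuotientAddGroup.mk γ))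
  have hT_ne : T ≠ ⊥ := by
    obtain ⟨g, hgW, hgne⟩ := Submodule.exists_mem_ne_zero_of_ne_bot hWnz
    obtain ⟨γ, hγ⟩ : ∃ γ : Γ, g γ ≠ 0 := by
      by_contra hc
      push_neg at hc
      exact hgne (funext hc)
    have hgU : g ∈ Uall := by
      have : g ∈ Wsh 0 := by
        rw [hWshdef]
        simp only
        rw [hσ_zero, Submodule.map_id]
        exact hgW
      exact hWsh_le_Uall 0 H.zero_mem this
    intro hT0
    have : g γ ∈ (⊥ : Submodule F V) := hT0 ▸ hD_le_T γ ⟨g, hgU, rfl⟩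
    exact hγ (by simpa using this)
  have hT_top : T = ⊤ := (hirr T hT_act hT_gr).resolve_left hT_ne
  -- every homogeneous component is attained by evaluation
  have hB_le_D : ∀ γ₀ : Γ, ℬ (QuotientAddGroup.mk γ₀) ≤ D γ₀ := by
    intro γ₀ v hv
    have hvT : v ∈ T := hT_top ▸ Submodule.mem_top
    have hsplit : T ≤ D γ₀ ⊔ ⨆ (Λ : Γ ⧸ H) (_ : Λ ≠ QuotientAddGroup.mk γ₀), ℬ Λ := by
      refine iSup_le fun γ => ?_
      by_cases hc : (QuotientAddGroup.mk γ : Γ ⧸ H) = QuotientAddGroup.mk γ₀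
      · have hd : γ - γ₀ ∈ H := by
          rw [QuotientAddGroup.eq] at hc
          have : -γ + γ₀ ∈ H := hc
          have h2 := H.neg_mem this
          simpa [neg_add_rev, sub_eq_add_neg, add_comm] using h2
        have : D γ = D γ₀ := by
          have := hD_shift γ₀ (γ - γ₀) hd
          simpa using this
        rw [this]
        exact le_sup_left
      · exact le_trans (hD_le γ)
          (le_trans (le_iSup₂ (f := fun (Λ : Γ ⧸ H) (_ : Λ ≠ QuotientAddGroup.mk γ₀) => ℬ Λ)
            (QuotientAddGroup.mk γ) hc) le_sup_right)
    obtain ⟨d, hd, w, hw, rfl⟩ := Submodule.mem_sup.mp (hsplit hvT)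
    have hw0 : w = 0 := by
      have hwB : w ∈ ℬ (QuotientAddGroup.mk γ₀) := by
        have hdB : d ∈ ℬ (QuotientAddGroup.mk γ₀) := hD_le γ₀ hd
        have : w = (d + w) - d := by abel
        rw [this]
        exact Submodule.sub_mem _ hv hdB
      have hdisj := (hℬ.submodule_iSupIndep (QuotientAddGroup.mk γ₀)).le_bot
        (Submodule.mem_inf.mpr ⟨hwB, hw⟩)
      simpa using hdisj
    rw [hw0, add_zero]
    exact hd
  -- Uall equals the whole loop module
  have hUall_L : Uall = L := by
    refine le_antisymm hGoodUall.1 ?_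
    intro g hg
    have hrep : g = ∑ γ₀ : Γ, (fun γ : Γ => if γ = γ₀ then g γ else 0) := by
      funext γ
      simp [Finset.sum_apply, Finset.sum_ite_eq]
    rw [hrep]
    refine Submodule.sum_mem _ fun γ₀ _ => ?_
    obtain ⟨u, huU, huγ⟩ : ∃ u ∈ Uall, u γ₀ = g γ₀ := by
      have : g γ₀ ∈ D γ₀ := hB_le_D γ₀ (hg γ₀ (Set.mem_univ γ₀))
      obtain ⟨u, hu, he⟩ := this
      exact ⟨u, hu, he⟩
    have hPu : (fun γ : Γ => if γ = γ₀ then u γ else 0) ∈ Uall :=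
      hGoodUall.2.2 γ₀ u huU
    have : (fun γ : Γ => if γ = γ₀ then g γ else 0)
        = (fun γ : Γ => if γ = γ₀ then u γ else 0) := by
      funext γ
      by_cases hγ : γ = γ₀
      · subst hγ; simp [huγ]
      · simp [hγ]
    rw [this]
    exact hPu
  -- select an independent subfamily
  obtain ⟨K, hKs, hind, hKsup⟩ := stmt12_selection Wsh Good hGoodbot hGoodsup hGoodinf s₀
    (fun i hi => hGoodWsh i ((hmem_s₀ i).mp hi))
    (fun i hi => hsimple i ((hmem_s₀ i).mp hi))
  refine ⟨K, ?_, ?_, ?_⟩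
  · intro x hx
    exact (hmem_s₀ x).mp (hKs hx)
  · intro x
    have hle : (⨆ (j : K) (_ : j ≠ x),
        Submodule.map (LinearMap.funLeft F V fun γ => γ + (j : Γ)) W)
          ≤ (K.erase (x : Γ)).sup Wsh := by
      refine iSup_le fun j => iSup_le fun hj => ?_
      exact Finset.le_sup (f := Wsh) (Finset.mem_erase.mpr ⟨fun e => hj (Subtype.ext e), j.2⟩)
    refine Disjoint.mono_right hle ?_
    rw [disjoint_iff]
    exact hind (x : Γ) x.2
  · rw [← Finset.sup_eq_iSup]
    show K.sup Wsh = L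
    rw [hKsup, ← hUalldef]
    exact hUall_L
end

section
/- Given a Γ-graded Lie colour algebra g with commutation factor ε and a multiplier σ, the twisted bracket [x,y]_σ = σ(α,β)⟦x,y⟧ (for x ∈ g_α, y ∈ g_β) makes g into a Γ-graded algebra whose commutation factor is ε(α,β)σ(α,β)/σ(β,α); in particular if σ(α,β)/σ(β,α) = ε(α,β)·(−1)^{|α||β|} then the twisted algebra is a Lie superalgebra. -/
/-- Given a `Γ`-graded Lie colour algebra `g` with
commutation factor `ε` and a multiplier (2-cocycle) `σ`, the twisted bracket
`[x,y]_σ = σ(α,β)⟦x,y⟧` (for `x ∈ g_α`, `y ∈ g_β`) makes `g` into a `Γ`-graded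
algebra whose commutation factor is `ε'(α,β) = ε(α,β)σ(α,β)/σ(β,α)`: `ε'` is
again a commutation factor and the twisted bracket satisfies the grading,
`ε'`-antisymmetry and `ε'`-Jacobi identities.  In particular, if
`σ(α,β)/σ(β,α)` differs from `(−1)^{|α||β|}` by the factor relating `ε` to the
super commutation factor (i.e. `ε(α,β)·σ(α,β)/σ(β,α) = (−1)^{|α||β|}` where
`|α|` is the parity determined by `ε(α,α) = (−1)^{|α|}`), then the twisted
algebra is a Lie superalgebra: `ε'(α,β) = (−1)^{|α||β|}`. -/
theorem stmt15 {F : Type*} [Field F] {Γ : Type*} [AddCommGroup Γ]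
    [DecidableEq Γ]
    {g : Type*} [AddCommGroup g] [Module F g]
    (𝒢 : Γ → Submodule F g) (hg : DirectSum.IsInternal 𝒢)
    (B : g →ₗ[F] g →ₗ[F] g)
    (ε : Γ → Γ → Fˣ)
    (hε₁ : ∀ α β : Γ, ε α β * ε β α = 1)
    (hε₂ : ∀ α β γ : Γ, ε (α + β) γ = ε α γ * ε β γ)
    (hε₃ : ∀ α β γ : Γ, ε α (β + γ) = ε α β * ε α γ)
    (hBgrade : ∀ α β : Γ, ∀ x ∈ 𝒢 α, ∀ y ∈ 𝒢 β, B x y ∈ 𝒢 (α + β))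
    (hBanti : ∀ α β : Γ, ∀ x ∈ 𝒢 α, ∀ y ∈ 𝒢 β,
      B x y = -((ε α β : F) • B y x))
    (hBjac : ∀ α β γ : Γ, ∀ x ∈ 𝒢 α, ∀ y ∈ 𝒢 β, ∀ z ∈ 𝒢 γ,
      (ε γ α : F) • B x (B y z) + (ε α β : F) • B y (B z x) +
        (ε β γ : F) • B z (B x y) = 0)
    -- `σ` is a multiplier (multiplicative 2-cocycle)
    (σ : Γ → Γ → Fˣ)
    (hσ : ∀ α β γ : Γ, σ α β * σ (α + β) γ = σ α (β + γ) * σ β γ)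
    -- the twisted bracket
    (Bσ : g →ₗ[F] g →ₗ[F] g)
    (hBσ : ∀ α β : Γ, ∀ x ∈ 𝒢 α, ∀ y ∈ 𝒢 β, Bσ x y = (σ α β : F) • B x y)
    -- the parity determined by `ε(α,α) = (−1)^{|α|}`
    (par : Γ → ℕ) (hpar₀ : ∀ α, par α = 0 ∨ par α = 1)
    (hpar : ∀ α, (ε α α : F) = (-1 : F) ^ par α) :
    -- the twisted commutation factor
    let ε' : Γ → Γ → Fˣ := fun α β => ε α β * σ α β * (σ β α)⁻¹
    -- `ε'` is a commutation factor …
    (∀ α β : Γ, ε' α β * ε' β α = 1) ∧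
    (∀ α β γ : Γ, ε' (α + β) γ = ε' α γ * ε' β γ) ∧
    (∀ α β γ : Γ, ε' α (β + γ) = ε' α β * ε' α γ) ∧
    -- … and the twisted bracket is a `Γ`-graded Lie colour bracket for `ε'`
    (∀ α β : Γ, ∀ x ∈ 𝒢 α, ∀ y ∈ 𝒢 β, Bσ x y ∈ 𝒢 (α + β)) ∧
    (∀ α β : Γ, ∀ x ∈ 𝒢 α, ∀ y ∈ 𝒢 β,
      Bσ x y = -((ε' α β : F) • Bσ y x)) ∧
    (∀ α β γ : Γ, ∀ x ∈ 𝒢 α, ∀ y ∈ 𝒢 β, ∀ z ∈ 𝒢 γ,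
      (ε' γ α : F) • Bσ x (Bσ y z) + (ε' α β : F) • Bσ y (Bσ z x) +
        (ε' β γ : F) • Bσ z (Bσ x y) = 0) ∧
    -- in particular: if `ε·σ/σʳᵉᵛ` is the super commutation factor, the
    -- twisted algebra is a Lie superalgebra
    ((∀ α β : Γ, ((ε α β * σ α β * (σ β α)⁻¹ : Fˣ) : F) =
        (-1 : F) ^ (par α * par β)) →
      ∀ α β : Γ, ((ε' α β : Fˣ) : F) = (-1 : F) ^ (par α * par β)) := by
  intro ε'
  -- scalar-level notation
  set s : Γ → Γ → F := fun α β => (σ α β : F) with hs_def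
  have hs : ∀ α β : Γ, s α β ≠ 0 := fun α β => Units.ne_zero _
  have hsc : ∀ α β γ : Γ, s α β * s (α + β) γ = s α (β + γ) * s β γ := by
    intro α β γ
    simpa [hs_def] using congrArg Units.val (hσ α β γ)
  have hεF : ∀ α β : Γ, (ε α β : F) * (ε β α : F) = 1 := by
    intro α β
    simpa using congrArg Units.val (hε₁ α β)
  -- the key bimultiplicativity of σ(α,β)/σ(β,α)
  have key : ∀ α β γ : Γ, s (α + β) γ * s γ α * s γ β = s γ (α + β) * s α γ * s β γ := by
    intro α β γ
    have c1 := hsc α β γ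
    have c2 := hsc γ α β
    have c3 := hsc α γ β
    rw [add_comm α γ, add_comm γ β] at c3
    have P : s α β * (s (α + β) γ * s γ α * s γ β)
        = s α β * (s γ (α + β) * s α γ * s β γ) := by
      linear_combination (s γ α * s γ β) * c1 + (s β γ * s α γ) * c2
        - (s β γ * s γ α) * c3
    exact mul_left_cancel₀ (hs α β) P
  have hval : ∀ α β : Γ, ((ε' α β : Fˣ) : F) = (ε α β : F) * s α β * (s β α)⁻¹ := by
    intro α β
    simp [ε', Units.val_mul]
    rfl
  refine ⟨?_, ?_, ?_, ?_, ?_, ?_, ?_⟩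
  · -- ε' α β * ε' β α = 1
    intro α β
    apply Units.ext
    push_cast [hval]
    field_simp [hs α β, hs β α]
    linear_combination hεF α β
  · -- additivity in the first argument
    intro α β γ
    apply Units.ext
    have h2 : ((ε (α + β) γ : Fˣ) : F) = (ε α γ : F) * (ε β γ : F) := by
      exact_mod_cast congrArg Units.val (hε₂ α β γ)
    push_cast [hval]
    rw [h2]
    field_simp [hs γ (α + β), hs γ α, hs γ β]
    linear_combination key α β γ
  · -- additivity in the second argument
    intro α β γ
    apply Units.ext
    have h3 : ((ε α (β + γ) : Fˣ) : F) = (ε α β : F) * (ε α γ : F) := by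
      exact_mod_cast congrArg Units.val (hε₃ α β γ)
    push_cast [hval]
    rw [h3]
    field_simp [hs (β + γ) α, hs β α, hs γ α]
    linear_combination (-1 : F) * key β γ α
  · -- grading
    intro α β x hx y hy
    rw [hBσ α β x hx y hy]
    exact Submodule.smul_mem _ _ (hBgrade α β x hx y hy)
  · -- antisymmetry
    intro α β x hx y hy
    rw [hBσ α β x hx y hy, hBσ β α y hy x hx, hBanti α β x hx y hy]
    rw [smul_neg, smul_smul, smul_smul]
    congr 1
    congr 1
    rw [hval]
    simp only [hs_def]
    field_simp
  · -- Jacobi identity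
    intro α β γ x hx y hy z hz
    have e1 : Bσ x (Bσ y z) = (s β γ * s α (β + γ)) • B x (B y z) := by
      rw [hBσ β γ y hy z hz, map_smul,
        hBσ α (β + γ) x hx _ (hBgrade β γ y hy z hz), smul_smul, mul_comm]
    have e2 : Bσ y (Bσ z x) = (s γ α * s β (γ + α)) • B y (B z x) := by
      rw [hBσ γ α z hz x hx, map_smul,
        hBσ β (γ + α) y hy _ (hBgrade γ α z hz x hx), smul_smul, mul_comm]
    have e3 : Bσ z (Bσ x y) = (s α β * s γ (α + β)) • B z (B x y) := by
      rw [hBσ α β x hx y hy, map_smul,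
        hBσ γ (α + β) z hz _ (hBgrade α β x hx y hy), smul_smul, mul_comm]
    rw [e1, e2, e3, smul_smul, smul_smul, smul_smul]
    set C : F := s γ α * s β γ * s α (β + γ) / s α γ with hC
    have hc1 : ((ε' γ α : Fˣ) : F) * (s β γ * s α (β + γ)) = (ε γ α : F) * C := by
      rw [hval, hC]; field_simp
    have hc2 : ((ε' α β : Fˣ) : F) * (s γ α * s β (γ + α)) = (ε α β : F) * C := by
      rw [hval, hC]
      have c1 := hsc α β γ
      have c2 := hsc β α γ
      rw [add_comm β α] at c2
      have hx2 : s α β * s β (α + γ) * s α γ = s β α * s β γ * s α (β + γ) := by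
        linear_combination (s β α) * c1 - (s α β) * c2
      rw [add_comm γ α]
      field_simp [hs β α, hs α γ]
      linear_combination (s γ α) * hx2
    have hc3 : ((ε' β γ : Fˣ) : F) * (s α β * s γ (α + β)) = (ε β γ : F) * C := by
      rw [hval, hC]
      have c1 := hsc γ α β
      have c2 := hsc α γ β
      rw [add_comm α γ, add_comm γ β] at c2
      have hx3 : s α β * s γ (α + β) * s α γ = s γ β * s γ α * s α (β + γ) := by
        linear_combination (s γ α) * c2 - (s α γ) * c1
      field_simp [hs γ β, hs α γ]
      linear_combination (s β γ) * hx3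
    have hswap : ∀ (a : F) (v : g), (a * C) • v = C • (a • v) := by
      intro a v; rw [mul_comm, mul_smul]
    rw [hc1, hc2, hc3, hswap, hswap, hswap, ← smul_add, ← smul_add,
      hBjac α β γ x hx y hy z hz, smul_zero]
  · -- superalgebra case
    intro H α β
    exact H α β
end

section
/- For any graded representation ρ : g → gl(V,ε) of a Lie colour algebra g and discolouring multiplier σ, the map ρ^σ defined by ρ^σ(x)v = σ(α,γ)ρ(x)v for x ∈ g_α, v ∈ V_γ is a graded representation of the twisted algebra g^σ, and U ⊆ V is a graded g-submodule if and only if it is a graded g^σ-submodule. -/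
/-- For any graded representation `ρ : g → gl(V,ε)` of a Lie
colour algebra `g` and discolouring multiplier `σ`, the map `ρ^σ` defined by
`ρ^σ(x)v = σ(α,γ)ρ(x)v` for `x ∈ g_α`, `v ∈ V_γ` is a graded representation of
the twisted algebra `g^σ` (with commutation factor
`ε^σ(α,β) = ε(α,β)σ(α,β)/σ(β,α)` and bracket `⟦x,y⟧_σ = σ(α,β)⟦x,y⟧`), and a
graded subspace `U ⊆ V` is a graded `g`-submodule if and only if it is a
graded `g^σ`-submodule. -/
theorem stmt16 {F : Type*} [Field F] {Γ : Type*} [AddCommGroup Γ]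
    [DecidableEq Γ]
    {g : Type*} [AddCommGroup g] [Module F g]
    (𝒢 : Γ → Submodule F g) (hg : DirectSum.IsInternal 𝒢)
    (B : g →ₗ[F] g →ₗ[F] g)
    (ε : Γ → Γ → Fˣ)
    (hε₁ : ∀ α β : Γ, ε α β * ε β α = 1)
    (hε₂ : ∀ α β γ : Γ, ε (α + β) γ = ε α γ * ε β γ)
    (hε₃ : ∀ α β γ : Γ, ε α (β + γ) = ε α β * ε α γ)
    (hBgrade : ∀ α β : Γ, ∀ x ∈ 𝒢 α, ∀ y ∈ 𝒢 β, B x y ∈ 𝒢 (α + β))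
    (hBanti : ∀ α β : Γ, ∀ x ∈ 𝒢 α, ∀ y ∈ 𝒢 β,
      B x y = -((ε α β : F) • B y x))
    (hBjac : ∀ α β γ : Γ, ∀ x ∈ 𝒢 α, ∀ y ∈ 𝒢 β, ∀ z ∈ 𝒢 γ,
      (ε γ α : F) • B x (B y z) + (ε α β : F) • B y (B z x) +
        (ε β γ : F) • B z (B x y) = 0)
    -- the graded vector space `V` and graded representation `ρ`
    {V : Type*} [AddCommGroup V] [Module F V]
    (𝒱 : Γ → Submodule F V) (hV : DirectSum.IsInternal 𝒱)
    (ρ : g →ₗ[F] V →ₗ[F] V)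
    (hρgrade : ∀ α γ : Γ, ∀ x ∈ 𝒢 α, ∀ v ∈ 𝒱 γ, ρ x v ∈ 𝒱 (α + γ))
    (hρbracket : ∀ α β : Γ, ∀ x ∈ 𝒢 α, ∀ y ∈ 𝒢 β, ∀ v : V,
      ρ (B x y) v = ρ x (ρ y v) - (ε α β : F) • ρ y (ρ x v))
    -- the multiplier and the twisted bracket
    (σ : Γ → Γ → Fˣ)
    (hσ : ∀ α β γ : Γ, σ α β * σ (α + β) γ = σ α (β + γ) * σ β γ)
    (Bσ : g →ₗ[F] g →ₗ[F] g)
    (hBσ : ∀ α β : Γ, ∀ x ∈ 𝒢 α, ∀ y ∈ 𝒢 β, Bσ x y = (σ α β : F) • B x y)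
    -- the twisted representation `ρ^σ`
    (ρσ : g →ₗ[F] V →ₗ[F] V)
    (hρσ : ∀ α γ : Γ, ∀ x ∈ 𝒢 α, ∀ v ∈ 𝒱 γ, ρσ x v = (σ α γ : F) • ρ x v) :
    -- `ρ^σ` is a graded representation of `g^σ` …
    (∀ α γ : Γ, ∀ x ∈ 𝒢 α, ∀ v ∈ 𝒱 γ, ρσ x v ∈ 𝒱 (α + γ)) ∧
    (∀ α β : Γ, ∀ x ∈ 𝒢 α, ∀ y ∈ 𝒢 β, ∀ v : V,
      ρσ (Bσ x y) v = ρσ x (ρσ y v) -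
        ((ε α β * σ α β * (σ β α)⁻¹ : Fˣ) : F) • ρσ y (ρσ x v)) ∧
    -- … and a graded subspace is a `g`-submodule iff it is a `g^σ`-submodule
    (∀ U : Submodule F V, (U = ⨆ γ : Γ, U ⊓ 𝒱 γ) →
      ((∀ (α : Γ), ∀ x ∈ 𝒢 α, ∀ v ∈ U, ρ x v ∈ U) ↔
        (∀ (α : Γ), ∀ x ∈ 𝒢 α, ∀ v ∈ U, ρσ x v ∈ U))) := by
  refine ⟨?_, ?_, ?_⟩
  · intro α γ x hx v hv
    rw [hρσ α γ x hx v hv]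
    exact (𝒱 (α + γ)).smul_mem _ (hρgrade α γ x hx v hv)
  · intro α β x hx y hy v
    have hVtop : (⨆ γ, 𝒱 γ) = ⊤ := hV.submodule_iSup_eq_top
    have hv : v ∈ ⨆ γ, 𝒱 γ := hVtop ▸ Submodule.mem_top
    refine Submodule.iSup_induction (motive := fun w =>
        ρσ (Bσ x y) w = ρσ x (ρσ y w) -
          ((ε α β * σ α β * (σ β α)⁻¹ : Fˣ) : F) • ρσ y (ρσ x w)) 𝒱 hv ?_ (by simp) ?_
    · intro γ w hw
      have hBxy : B x y ∈ 𝒢 (α + β) := hBgrade α β x hx y hy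
      have hyw : ρ y w ∈ 𝒱 (β + γ) := hρgrade β γ y hy w hw
      have hxw : ρ x w ∈ 𝒱 (α + γ) := hρgrade α γ x hx w hw
      have lhs : ρσ (Bσ x y) w
          = (σ α β : F) • ((σ (α + β) γ : F) • (ρ x (ρ y w) - (ε α β : F) • ρ y (ρ x w))) := by
        rw [hBσ α β x hx y hy, map_smul, LinearMap.smul_apply,
          hρσ (α + β) γ _ hBxy w hw, hρbracket α β x hx y hy w]
      have rhs1 : ρσ x (ρσ y w) = (σ β γ : F) • ((σ α (β + γ) : F) • ρ x (ρ y w)) := by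
        rw [hρσ β γ y hy w hw, map_smul, hρσ α (β + γ) x hx _ hyw]
      have rhs2 : ρσ y (ρσ x w) = (σ α γ : F) • ((σ β (α + γ) : F) • ρ y (ρ x w)) := by
        rw [hρσ α γ x hx w hw, map_smul, hρσ β (α + γ) y hy _ hxw]
      rw [lhs, rhs1, rhs2]
      simp only [smul_sub, smul_smul]
      have c1 : ((σ α β : F) * (σ (α + β) γ : F)) = ((σ β γ : F) * (σ α (β + γ) : F)) := by
        have := hσ α β γ
        have : (σ α β * σ (α + β) γ : Fˣ) = σ β γ * σ α (β + γ) := by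
          rw [this]; exact mul_comm _ _
        exact_mod_cast congrArg (Units.val) this
      have c2 : ((σ α β : F) * (σ (α + β) γ : F) * (ε α β : F))
          = (((ε α β * σ α β * (σ β α)⁻¹ : Fˣ) : F) * ((σ α γ : F) * (σ β (α + γ) : F))) := by
        have h2 : (σ β α * σ (α + β) γ : Fˣ) = σ β (α + γ) * σ α γ := by
          have := hσ β α γ
          rwa [add_comm β α] at this
        have key : (σ α β * σ (α + β) γ * ε α β : Fˣ)
            = (ε α β * σ α β * (σ β α)⁻¹) * (σ α γ * σ β (α + γ)) := by
          rw [mul_assoc (ε α β * σ α β), ← mul_comm (σ β (α + γ)) (σ α γ), ← h2]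
          group
          rw [mul_comm (σ α β * σ (α + β) γ) (ε α β), mul_assoc]
        exact_mod_cast congrArg (Units.val) key
      congr 1
      · rw [c1]
      · congr 1
        linear_combination c2
    · intro w₁ w₂ h1 h2
      simp only [map_add, smul_add]
      rw [h1, h2]
      abel
  · intro U hU
    constructor
    · intro h α x hx v hv
      have hv' : v ∈ ⨆ γ, U ⊓ 𝒱 γ := hU ▸ hv
      refine Submodule.iSup_induction (motive := fun w => ρσ x w ∈ U) _ hv' ?_ (by simpa using U.zero_mem) ?_
      · rintro γ w ⟨hwU, hwγ⟩
        rw [hρσ α γ x hx w hwγ]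
        exact U.smul_mem _ (h α x hx w hwU)
      · intro w₁ w₂ h1 h2
        rw [map_add]; exact U.add_mem h1 h2
    · intro h α x hx v hv
      have hv' : v ∈ ⨆ γ, U ⊓ 𝒱 γ := hU ▸ hv
      refine Submodule.iSup_induction (motive := fun w => ρ x w ∈ U) _ hv' ?_ (by simpa using U.zero_mem) ?_
      · rintro γ w ⟨hwU, hwγ⟩
        have : ρ x w = (((σ α γ)⁻¹ : Fˣ) : F) • ρσ x w := by
          rw [hρσ α γ x hx w hwγ, smul_smul, ← Units.val_mul, inv_mul_cancel, Units.val_one,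
            one_smul]
        rw [this]
        exact U.smul_mem _ (h α x hx w hwU)
      · intro w₁ w₂ h1 h2
        rw [map_add]; exact U.add_mem h1 h2
end

section
/- For λ even, the sl(2)-module V_λ admits a Z₂×Z₂-grading refining the above Z₂-grading: W_{00} = span{v_j + v_{λ−j} : j even}, W_{01} = span{v_j + v_{λ−j} : j odd}, W_{10} = span{v_j − v_{λ−j} : j odd}, W_{11} = span{v_j − v_{λ−j} : j even}, and under this grading a₁ shifts degree by 10, a₂ by 01, and a₃ by 11. -/
noncomputable def sg (l j : ℕ) (ε : ℂ) : ℕ → ℂ :=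
  (Pi.single j 1 : ℕ → ℂ) + ε • (Pi.single (l - j) 1 : ℕ → ℂ)

lemma sg_apply (l j : ℕ) (ε : ℂ) (m : ℕ) :
    sg l j ε m = (if j = m then 1 else 0) + ε * (if l - j = m then 1 else 0) := by
  simp only [sg, Pi.add_apply, Pi.smul_apply, Pi.single_apply, smul_eq_mul, eq_comm]

lemma sg_zero_of_gt {l j m : ℕ} (hj : j ≤ l) (hm : l < m) (ε : ℂ) : sg l j ε m = 0 := by
  rw [sg_apply, if_neg (by omega), if_neg (by omega)]; ring

lemma sg_zero_of_parity {l j m : ℕ} (hl : l % 2 = 0) (hj : j ≤ l) (hp : j % 2 ≠ m % 2)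
    (ε : ℂ) : sg l j ε m = 0 := by
  rw [sg_apply, if_neg (by omega), if_neg (by omega)]; ring

lemma sg_symm {l j k : ℕ} {ε : ℂ} (hε : ε * ε = 1) (hj : j ≤ l) (hk : k ≤ l) :
    sg l j ε (l - k) = ε * sg l j ε k := by
  rw [sg_apply, sg_apply]
  simp only [show (j = l - k) ↔ (l - j = k) from by omega,
    show (l - j = l - k) ↔ (j = k) from by omega]
  split_ifs <;> first | linear_combination -hε | linear_combination

noncomputable def opA (l : ℕ) (c₁ c₂ : ℂ) (x : ℕ → ℂ) : ℕ → ℂ :=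
  fun k => c₁ * (((l : ℂ) - k) * x (k + 1)) + c₂ * ((if k ≤ l then (k : ℂ) else 0) * x (k - 1))

noncomputable def opH (l : ℕ) (c : ℂ) (x : ℕ → ℂ) : ℕ → ℂ :=
  fun k => c * (((l : ℂ) - 2 * k) * x k)

lemma opA_supp {l j k : ℕ} (c₁ c₂ ε : ℂ) (hl : l % 2 = 0) (hj : j ≤ l)
    (h : ¬(k ≤ l ∧ k % 2 ≠ j % 2)) : opA l c₁ c₂ (sg l j ε) k = 0 := by
  unfold opA
  by_cases hk : k ≤ l
  · have h2 : k % 2 = j % 2 := by omega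
    rw [sg_zero_of_parity hl hj (by omega) ε, if_pos hk]
    rcases Nat.eq_zero_or_pos k with h0 | h0
    · subst h0; norm_num
    · rw [sg_zero_of_parity hl hj (by omega) ε]; ring
  · rw [sg_zero_of_gt hj (by omega) ε, if_neg hk]; ring

lemma opH_supp {l j k : ℕ} (c ε : ℂ) (hl : l % 2 = 0) (hj : j ≤ l)
    (h : ¬(k ≤ l ∧ k % 2 = j % 2)) : opH l c (sg l j ε) k = 0 := by
  unfold opH
  by_cases hk : k ≤ l
  · rw [sg_zero_of_parity hl hj (by omega) ε]; ring
  · rw [sg_zero_of_gt hj (by omega) ε]; ring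

lemma opA_symm {l j k : ℕ} {ε : ℂ} (c₁ c₂ : ℂ) (hε : ε * ε = 1) (hj : j ≤ l) (hk : k ≤ l) :
    opA l c₁ c₂ (sg l j ε) (l - k) = ε * opA l c₂ c₁ (sg l j ε) k := by
  unfold opA
  rw [if_pos (by omega : l - k ≤ l), Nat.cast_sub hk]
  by_cases h0 : k = 0
  · subst h0
    by_cases hl0 : l = 0
    · subst hl0
      simp only [Nat.cast_zero]
      rw [if_pos (le_refl 0)]
      push_cast; ring
    · rw [show l - 0 + 1 = l + 1 from rfl, show (0:ℕ) - 1 = 0 from rfl,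
        show l - 0 - 1 = l - 1 from rfl,
        sg_zero_of_gt hj (by omega) ε,
        show sg l j ε (l-1) = ε * sg l j ε 1 from sg_symm hε hj (by omega),
        show (0:ℕ) + 1 = 1 from rfl, if_pos (by omega : (0:ℕ) ≤ l)]
      push_cast; ring
  · rw [show l - k + 1 = l - (k-1) from by omega, sg_symm hε hj (by omega : k - 1 ≤ l),
      if_pos hk]
    by_cases hkl : k = l
    · rw [show ((l:ℕ):ℂ) = ((k:ℕ):ℂ) from by rw [hkl]]
      ring
    · rw [show l - k - 1 = l - (k+1) from by omega, sg_symm hε hj (by omega : k + 1 ≤ l)]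
      ring

lemma opH_symm {l j k : ℕ} {ε : ℂ} (c : ℂ) (hε : ε * ε = 1) (hj : j ≤ l) (hk : k ≤ l) :
    opH l c (sg l j ε) (l - k) = (-ε) * opH l c (sg l j ε) k := by
  unfold opH
  rw [Nat.cast_sub hk, sg_symm hε hj hk]
  ring

lemma opA_symm_anti {l j k : ℕ} {ε : ℂ} (c : ℂ) (hε : ε * ε = 1) (hj : j ≤ l) (hk : k ≤ l) :
    opA l c (-c) (sg l j ε) (l - k) = (-ε) * opA l c (-c) (sg l j ε) k := by
  rw [opA_symm c (-c) hε hj hk]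
  unfold opA
  ring

lemma opA_symm_sym {l j k : ℕ} {ε : ℂ} (c : ℂ) (hε : ε * ε = 1) (hj : j ≤ l) (hk : k ≤ l) :
    opA l c c (sg l j ε) (l - k) = ε * opA l c c (sg l j ε) k :=
  opA_symm c c hε hj hk

lemma key (l : ℕ) (ε : ℂ) (hε : ε * ε = 1) (π : ℕ → Prop) [DecidablePred π]
    (hπ : ∀ k, k ≤ l → (π (l - k) ↔ π k))
    (W : Submodule ℂ (ℕ → ℂ))
    (hgen : ∀ j, j ≤ l → π j → sg l j ε ∈ W)
    (x : ℕ → ℂ)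
    (h0 : ∀ k, ¬(k ≤ l ∧ π k) → x k = 0)
    (h2 : ∀ k, k ≤ l → x (l - k) = ε * x k) :
    x ∈ W := by
  have hx : x = (2⁻¹ : ℂ) • ∑ p ∈ Finset.range (l+1), (if π p then x p else 0) • sg l p ε := by
    funext k
    rw [Pi.smul_apply, Finset.sum_apply, smul_eq_mul]
    by_cases hk : k ≤ l
    · have e : ∀ p ∈ Finset.range (l+1),
          ((if π p then x p else 0) • sg l p ε) k
            = (if p = k then x k else 0) + (if p = l - k then x k else 0) := by
        intro p hp
        rw [Finset.mem_range] at hp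
        simp only [Pi.smul_apply, smul_eq_mul]
        rw [sg_apply]
        simp only [show (l - p = k) ↔ (p = l - k) from by omega]
        by_cases h1 : p = k
        · subst h1
          simp only [eq_self_iff_true, if_true]
          by_cases h2' : p = l - p
          · simp only [if_pos h2']
            by_cases hπp : π p
            · rw [if_pos hπp]
              have hx2 : x (l - p) = ε * x p := h2 p (by omega)
              rw [← h2'] at hx2
              linear_combination -hx2
            · rw [if_neg hπp, h0 p (by tauto)]; ring
          · simp only [if_neg h2']
            by_cases hπp : π p
            · rw [if_pos hπp]; ring
            · rw [if_neg hπp, h0 p (by tauto)]; ring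
        · rw [if_neg h1, if_neg h1]
          by_cases h2' : p = l - k
          · rw [if_pos h2', if_pos h2']
            subst h2'
            by_cases hπk : π k
            · rw [if_pos ((hπ k hk).mpr hπk), h2 k hk]
              linear_combination (x k) * hε
            · rw [if_neg (fun hc => hπk ((hπ k hk).mp hc)), h0 k (by tauto)]; ring
          · rw [if_neg h2', if_neg h2']; ring
      rw [Finset.sum_congr rfl e, Finset.sum_add_distrib,
        Finset.sum_ite_eq' (Finset.range (l+1)) k (fun _ => x k),
        Finset.sum_ite_eq' (Finset.range (l+1)) (l - k) (fun _ => x k),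
        if_pos (Finset.mem_range.mpr (by omega)), if_pos (Finset.mem_range.mpr (by omega))]
      ring
    · rw [h0 k (by tauto), Finset.sum_eq_zero, mul_zero]
      intro p hp
      rw [Finset.mem_range] at hp
      simp only [Pi.smul_apply]
      rw [sg_zero_of_gt (show p ≤ l by omega) (show l < k by omega) ε, smul_zero]
  rw [hx]
  refine Submodule.smul_mem _ _ (Submodule.sum_mem _ fun p hp => ?_)
  rw [Finset.mem_range] at hp
  by_cases hπp : π p
  · rw [if_pos hπp]
    exact Submodule.smul_mem _ _ (hgen p (by omega) hπp)
  · rw [if_neg hπp, zero_smul]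
    exact zero_mem _

lemma span_prop (l : ℕ) (ε : ℂ) (hε : ε * ε = 1) (r : ℕ) (hl : l % 2 = 0)
    (S : Set (ℕ → ℂ)) (hS : ∀ y ∈ S, ∃ j, j ≤ l ∧ j % 2 = r ∧ y = sg l j ε)
    {x : ℕ → ℂ} (hx : x ∈ Submodule.span ℂ S) :
    (∀ k, ¬(k ≤ l ∧ k % 2 = r) → x k = 0) ∧ (∀ k, k ≤ l → x (l - k) = ε * x k) := by
  induction hx using Submodule.span_induction with
  | mem y hy =>
    obtain ⟨j, hj, hjr, rfl⟩ := hS y hy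
    constructor
    · intro k hk
      by_cases hkl : k ≤ l
      · exact sg_zero_of_parity hl hj (by omega) ε
      · exact sg_zero_of_gt hj (by omega) ε
    · intro k hk; exact sg_symm hε hj hk
  | zero => exact ⟨fun _ _ => rfl, fun _ _ => by simp⟩
  | add a b _ _ ha hb =>
    refine ⟨fun k hk => ?_, fun k hk => ?_⟩
    · simp only [Pi.add_apply]; rw [ha.1 k hk, hb.1 k hk, add_zero]
    · simp only [Pi.add_apply]; rw [ha.2 k hk, hb.2 k hk]; ring
  | smul c a _ ha =>
    refine ⟨fun k hk => ?_, fun k hk => ?_⟩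
    · simp only [Pi.smul_apply, smul_eq_mul]; rw [ha.1 k hk, mul_zero]
    · simp only [Pi.smul_apply, smul_eq_mul]; rw [ha.2 k hk]; ring

lemma memVpi (l : ℕ) (π : ℕ → Prop) [DecidablePred π] (x : ℕ → ℂ) :
    x ∈ Submodule.pi Set.univ (fun j : ℕ => if j ≤ l ∧ π j then (⊤ : Submodule ℂ ℂ) else ⊥) ↔
      ∀ k, ¬(k ≤ l ∧ π k) → x k = 0 := by
  rw [Submodule.mem_pi]
  constructor
  · intro H k hk
    have := H k (Set.mem_univ k)
    rw [if_neg hk] at this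
    exact this
  · intro H k _
    by_cases h : k ≤ l ∧ π k
    · rw [if_pos h]; trivial
    · rw [if_neg h, Submodule.mem_bot]; exact H k h

/-- For `λ` even, the `sl(2)`-module `V_λ` admits a
`ℤ₂×ℤ₂`-grading refining the `ℤ₂`-grading of Statement 18:
`W_{00} = span{v_j + v_{λ−j} : j even}`, `W_{01} = span{v_j + v_{λ−j} : j odd}`,
`W_{10} = span{v_j − v_{λ−j} : j odd}`, `W_{11} = span{v_j − v_{λ−j} : j even}`,
and under this grading `a₁` shifts degree by `10`, `a₂` by `01` and `a₃` by
`11`.  (The module is realised on functions `ℕ → ℂ` supported on `{0,…,λ}`,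
with `v_j = Pi.single j 1`.) -/
theorem stmt19 (l : ℕ) (hleven : Even l) :
    let hL : (ℕ → ℂ) →ₗ[ℂ] (ℕ → ℂ) :=
      LinearMap.pi fun j : ℕ => ((l : ℂ) - 2 * j) • LinearMap.proj j
    let eL : (ℕ → ℂ) →ₗ[ℂ] (ℕ → ℂ) :=
      LinearMap.pi fun j : ℕ => ((l : ℂ) - j) • LinearMap.proj (j + 1)
    let fL : (ℕ → ℂ) →ₗ[ℂ] (ℕ → ℂ) :=
      LinearMap.pi fun j : ℕ => (if j ≤ l then (j : ℂ) else 0) • LinearMap.proj (j - 1)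
    let a₁ := (Complex.I / 2) • (eL - fL)
    let a₂ := -((1 : ℂ) / 2) • (eL + fL)
    let a₃ := -(Complex.I / 2) • hL
    let v : ℕ → (ℕ → ℂ) := fun j => (Pi.single j 1 : ℕ → ℂ)
    let Veven : Submodule ℂ (ℕ → ℂ) :=
      Submodule.pi Set.univ fun j : ℕ => if j ≤ l ∧ Even j then ⊤ else ⊥
    let Vodd : Submodule ℂ (ℕ → ℂ) :=
      Submodule.pi Set.univ fun j : ℕ => if j ≤ l ∧ Odd j then ⊤ else ⊥
    let W00 : Submodule ℂ (ℕ → ℂ) :=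
      Submodule.span ℂ {x | ∃ j : ℕ, j ≤ l ∧ Even j ∧ x = v j + v (l - j)}
    let W01 : Submodule ℂ (ℕ → ℂ) :=
      Submodule.span ℂ {x | ∃ j : ℕ, j ≤ l ∧ Odd j ∧ x = v j + v (l - j)}
    let W10 : Submodule ℂ (ℕ → ℂ) :=
      Submodule.span ℂ {x | ∃ j : ℕ, j ≤ l ∧ Odd j ∧ x = v j - v (l - j)}
    let W11 : Submodule ℂ (ℕ → ℂ) :=
      Submodule.span ℂ {x | ∃ j : ℕ, j ≤ l ∧ Even j ∧ x = v j - v (l - j)}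
    -- the ℤ₂×ℤ₂-grading refines the ℤ₂-grading and is a direct decomposition
    (W00 ⊔ W11 = Veven) ∧ (W01 ⊔ W10 = Vodd) ∧
    (W00 ⊓ W11 = ⊥) ∧ (W01 ⊓ W10 = ⊥) ∧
    -- `a₁` shifts degree by `10`
    (∀ x ∈ W00, a₁ x ∈ W10) ∧ (∀ x ∈ W10, a₁ x ∈ W00) ∧
    (∀ x ∈ W01, a₁ x ∈ W11) ∧ (∀ x ∈ W11, a₁ x ∈ W01) ∧
    -- `a₂` shifts degree by `01`
    (∀ x ∈ W00, a₂ x ∈ W01) ∧ (∀ x ∈ W01, a₂ x ∈ W00) ∧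
    (∀ x ∈ W10, a₂ x ∈ W11) ∧ (∀ x ∈ W11, a₂ x ∈ W10) ∧
    -- `a₃` shifts degree by `11`
    (∀ x ∈ W00, a₃ x ∈ W11) ∧ (∀ x ∈ W11, a₃ x ∈ W00) ∧
    (∀ x ∈ W01, a₃ x ∈ W10) ∧ (∀ x ∈ W10, a₃ x ∈ W01) := by
  intro hL eL fL a₁ a₂ a₃ v Veven Vodd W00 W01 W10 W11
  have hl2 : l % 2 = 0 := Nat.even_iff.mp hleven
  -- pointwise formulas for the operators
  have hva1 : ∀ x, a₁ x = opA l (Complex.I/2) (-(Complex.I/2)) x := by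
    intro x; funext k
    simp only [a₁, eL, fL, LinearMap.smul_apply, LinearMap.sub_apply, LinearMap.pi_apply,
      LinearMap.proj_apply, Pi.smul_apply, Pi.sub_apply, smul_eq_mul, opA]
    ring
  have hva2 : ∀ x, a₂ x = opA l (-((1:ℂ)/2)) (-((1:ℂ)/2)) x := by
    intro x; funext k
    simp only [a₂, eL, fL, LinearMap.smul_apply, LinearMap.add_apply, LinearMap.pi_apply,
      LinearMap.proj_apply, Pi.smul_apply, Pi.add_apply, smul_eq_mul, opA]
    ring
  have hva3 : ∀ x, a₃ x = opH l (-(Complex.I/2)) x := by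
    intro x; funext k
    simp only [a₃, hL, LinearMap.smul_apply, LinearMap.pi_apply,
      LinearMap.proj_apply, Pi.smul_apply, smul_eq_mul, opH]
  -- identification of the generators
  have hsgp : ∀ j, sg l j 1 = v j + v (l - j) := by
    intro j; simp [sg, v]
  have hsgm : ∀ j, sg l j (-1) = v j - v (l - j) := by
    intro j; simp [sg, v, sub_eq_add_neg]
  -- membership criteria for the four pieces
  have h00 : ∀ y : ℕ → ℂ, (∀ k, ¬(k ≤ l ∧ k % 2 = 0) → y k = 0) →
      (∀ k, k ≤ l → y (l - k) = 1 * y k) → y ∈ W00 := by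
    intro y hy0 hy2
    refine key l 1 (by norm_num) (fun k => k % 2 = 0) (fun k hk => by constructor <;> (intro; omega))
      W00 ?_ y hy0 hy2
    intro j hj hjr
    rw [hsgp j]
    exact Submodule.subset_span ⟨j, hj, Nat.even_iff.mpr hjr, rfl⟩
  have h01 : ∀ y : ℕ → ℂ, (∀ k, ¬(k ≤ l ∧ k % 2 = 1) → y k = 0) →
      (∀ k, k ≤ l → y (l - k) = 1 * y k) → y ∈ W01 := by
    intro y hy0 hy2
    refine key l 1 (by norm_num) (fun k => k % 2 = 1) (fun k hk => by constructor <;> (intro; omega))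
      W01 ?_ y hy0 hy2
    intro j hj hjr
    rw [hsgp j]
    exact Submodule.subset_span ⟨j, hj, Nat.odd_iff.mpr hjr, rfl⟩
  have h10 : ∀ y : ℕ → ℂ, (∀ k, ¬(k ≤ l ∧ k % 2 = 1) → y k = 0) →
      (∀ k, k ≤ l → y (l - k) = -1 * y k) → y ∈ W10 := by
    intro y hy0 hy2
    refine key l (-1) (by norm_num) (fun k => k % 2 = 1) (fun k hk => by constructor <;> (intro; omega))
      W10 ?_ y hy0 hy2
    intro j hj hjr
    rw [hsgm j]
    exact Submodule.subset_span ⟨j, hj, Nat.odd_iff.mpr hjr, rfl⟩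
  have h11 : ∀ y : ℕ → ℂ, (∀ k, ¬(k ≤ l ∧ k % 2 = 0) → y k = 0) →
      (∀ k, k ≤ l → y (l - k) = -1 * y k) → y ∈ W11 := by
    intro y hy0 hy2
    refine key l (-1) (by norm_num) (fun k => k % 2 = 0) (fun k hk => by constructor <;> (intro; omega))
      W11 ?_ y hy0 hy2
    intro j hj hjr
    rw [hsgm j]
    exact Submodule.subset_span ⟨j, hj, Nat.even_iff.mpr hjr, rfl⟩
  -- the two sup identities
  have gsup : ∀ (π : ℕ → Prop) (_ : DecidablePred π) (ε : ℂ), True := fun _ _ _ => trivial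
  refine ⟨?_, ?_, ?_, ?_, ?_, ?_, ?_, ?_, ?_, ?_, ?_, ?_, ?_, ?_, ?_, ?_⟩
  · -- W00 ⊔ W11 = Veven
    apply le_antisymm
    · refine sup_le (Submodule.span_le.mpr ?_) (Submodule.span_le.mpr ?_) <;>
        rintro y ⟨j, hj, hje, rfl⟩ <;>
        [rw [← hsgp j]; rw [← hsgm j]] <;>
        · rw [SetLike.mem_coe]
          simp only [Veven]
          rw [memVpi]
          intro k hk
          have hj2 : j % 2 = 0 := Nat.even_iff.mp hje
          by_cases hkl : k ≤ l
          · refine sg_zero_of_parity hl2 hj ?_ _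
            intro hpar
            exact hk ⟨hkl, Nat.even_iff.mpr (by omega)⟩
          · exact sg_zero_of_gt hj (by omega) _
    · intro x hx
      simp only [Veven] at hx
      rw [memVpi] at hx
      set xp : ℕ → ℂ := fun k => if k ≤ l then (x k + x (l - k))/2 else 0 with hxp
      set xm : ℕ → ℂ := fun k => if k ≤ l then (x k - x (l - k))/2 else 0 with hxm
      have hsum : x = xp + xm := by
        funext k
        by_cases hk : k ≤ l
        · simp only [hxp, hxm, Pi.add_apply, if_pos hk]; ring
        · simp only [hxp, hxm, Pi.add_apply, if_neg hk]
          rw [hx k (by tauto)]; norm_num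
      rw [hsum]
      refine Submodule.add_mem_sup (h00 xp ?_ ?_) (h11 xm ?_ ?_)
      · intro k hk
        simp only [hxp]
        by_cases hkl : k ≤ l
        · have e1 : x k = 0 := hx k (fun h => hk ⟨h.1, Nat.even_iff.mp h.2⟩)
          have e2 : x (l - k) = 0 := hx (l - k)
            (fun h => hk ⟨hkl, by have := Nat.even_iff.mp h.2; omega⟩)
          rw [if_pos hkl, e1, e2]; norm_num
        · rw [if_neg hkl]
      · intro k hk
        simp only [hxp]
        rw [if_pos (show l - k ≤ l by omega), if_pos hk, show l - (l - k) = k from by omega]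
        ring
      · intro k hk
        simp only [hxm]
        by_cases hkl : k ≤ l
        · have e1 : x k = 0 := hx k (fun h => hk ⟨h.1, Nat.even_iff.mp h.2⟩)
          have e2 : x (l - k) = 0 := hx (l - k)
            (fun h => hk ⟨hkl, by have := Nat.even_iff.mp h.2; omega⟩)
          rw [if_pos hkl, e1, e2]; norm_num
        · rw [if_neg hkl]
      · intro k hk
        simp only [hxm]
        rw [if_pos (show l - k ≤ l by omega), if_pos hk, show l - (l - k) = k from by omega]
        ring
  · -- W01 ⊔ W10 = Vodd
    apply le_antisymm
    · refine sup_le (Submodule.span_le.mpr ?_) (Submodule.span_le.mpr ?_) <;>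
        rintro y ⟨j, hj, hje, rfl⟩ <;>
        [rw [← hsgp j]; rw [← hsgm j]] <;>
        · rw [SetLike.mem_coe]
          simp only [Vodd]
          rw [memVpi]
          intro k hk
          have hj2 : j % 2 = 1 := Nat.odd_iff.mp hje
          by_cases hkl : k ≤ l
          · refine sg_zero_of_parity hl2 hj ?_ _
            intro hpar
            exact hk ⟨hkl, Nat.odd_iff.mpr (by omega)⟩
          · exact sg_zero_of_gt hj (by omega) _
    · intro x hx
      simp only [Vodd] at hx
      rw [memVpi] at hx
      set xp : ℕ → ℂ := fun k => if k ≤ l then (x k + x (l - k))/2 else 0 with hxp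
      set xm : ℕ → ℂ := fun k => if k ≤ l then (x k - x (l - k))/2 else 0 with hxm
      have hsum : x = xp + xm := by
        funext k
        by_cases hk : k ≤ l
        · simp only [hxp, hxm, Pi.add_apply, if_pos hk]; ring
        · simp only [hxp, hxm, Pi.add_apply, if_neg hk]
          rw [hx k (by tauto)]; norm_num
      rw [hsum]
      refine Submodule.add_mem_sup (h01 xp ?_ ?_) (h10 xm ?_ ?_)
      · intro k hk
        simp only [hxp]
        by_cases hkl : k ≤ l
        · have e1 : x k = 0 := hx k (fun h => hk ⟨h.1, Nat.odd_iff.mp h.2⟩)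
          have e2 : x (l - k) = 0 := hx (l - k)
            (fun h => hk ⟨hkl, by have := Nat.odd_iff.mp h.2; omega⟩)
          rw [if_pos hkl, e1, e2]; norm_num
        · rw [if_neg hkl]
      · intro k hk
        simp only [hxp]
        rw [if_pos (show l - k ≤ l by omega), if_pos hk, show l - (l - k) = k from by omega]
        ring
      · intro k hk
        simp only [hxm]
        by_cases hkl : k ≤ l
        · have e1 : x k = 0 := hx k (fun h => hk ⟨h.1, Nat.odd_iff.mp h.2⟩)
          have e2 : x (l - k) = 0 := hx (l - k)
            (fun h => hk ⟨hkl, by have := Nat.odd_iff.mp h.2; omega⟩)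
          rw [if_pos hkl, e1, e2]; norm_num
        · rw [if_neg hkl]
      · intro k hk
        simp only [hxm]
        rw [if_pos (show l - k ≤ l by omega), if_pos hk, show l - (l - k) = k from by omega]
        ring
  · -- W00 ⊓ W11 = ⊥
    rw [eq_bot_iff]
    intro x hx
    rw [Submodule.mem_inf] at hx
    have p0 := span_prop l 1 (by norm_num) 0 hl2 _
      (fun y hy => by
        obtain ⟨j, hj, hje, rfl⟩ := hy
        exact ⟨j, hj, Nat.even_iff.mp hje, (hsgp j).symm⟩) hx.1
    have p1 := span_prop l (-1) (by norm_num) 0 hl2 _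
      (fun y hy => by
        obtain ⟨j, hj, hje, rfl⟩ := hy
        exact ⟨j, hj, Nat.even_iff.mp hje, (hsgm j).symm⟩) hx.2
    rw [Submodule.mem_bot]
    funext k
    by_cases hk : k ≤ l
    · have he0 := p0.2 k hk
      have he1 := p1.2 k hk
      have : x k = 0 := by linear_combination (he1 - he0)/2
      simpa using this
    · simpa using p0.1 k (by tauto)
  · -- W01 ⊓ W10 = ⊥
    rw [eq_bot_iff]
    intro x hx
    rw [Submodule.mem_inf] at hx
    have p0 := span_prop l 1 (by norm_num) 1 hl2 _
      (fun y hy => by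
        obtain ⟨j, hj, hje, rfl⟩ := hy
        exact ⟨j, hj, Nat.odd_iff.mp hje, (hsgp j).symm⟩) hx.1
    have p1 := span_prop l (-1) (by norm_num) 1 hl2 _
      (fun y hy => by
        obtain ⟨j, hj, hje, rfl⟩ := hy
        exact ⟨j, hj, Nat.odd_iff.mp hje, (hsgm j).symm⟩) hx.2
    rw [Submodule.mem_bot]
    funext k
    by_cases hk : k ≤ l
    · have he0 := p0.2 k hk
      have he1 := p1.2 k hk
      have : x k = 0 := by linear_combination (he1 - he0)/2
      simpa using this
    · simpa using p0.1 k (by tauto)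
  -- a₁ : W00 → W10
  · intro x hx
    suffices hsub : W00 ≤ Submodule.comap a₁ W10 by exact hsub hx
    refine Submodule.span_le.mpr ?_
    rintro y ⟨j, hj, hje, rfl⟩
    have hj2 : j % 2 = 0 := Nat.even_iff.mp hje
    simp only [SetLike.mem_coe, Submodule.mem_comap]
    rw [← hsgp j, hva1]
    exact h10 _ (fun k hk => opA_supp _ _ _ hl2 hj (by omega))
      (fun k hk => by rw [opA_symm_anti _ (by norm_num) hj hk]; try ring)
  -- a₁ : W10 → W00
  · intro x hx
    suffices hsub : W10 ≤ Submodule.comap a₁ W00 by exact hsub hx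
    refine Submodule.span_le.mpr ?_
    rintro y ⟨j, hj, hje, rfl⟩
    have hj2 : j % 2 = 1 := Nat.odd_iff.mp hje
    simp only [SetLike.mem_coe, Submodule.mem_comap]
    rw [← hsgm j, hva1]
    exact h00 _ (fun k hk => opA_supp _ _ _ hl2 hj (by omega))
      (fun k hk => by rw [opA_symm_anti _ (by norm_num) hj hk]; try ring)
  -- a₁ : W01 → W11
  · intro x hx
    suffices hsub : W01 ≤ Submodule.comap a₁ W11 by exact hsub hx
    refine Submodule.span_le.mpr ?_
    rintro y ⟨j, hj, hje, rfl⟩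
    have hj2 : j % 2 = 1 := Nat.odd_iff.mp hje
    simp only [SetLike.mem_coe, Submodule.mem_comap]
    rw [← hsgp j, hva1]
    exact h11 _ (fun k hk => opA_supp _ _ _ hl2 hj (by omega))
      (fun k hk => by rw [opA_symm_anti _ (by norm_num) hj hk]; try ring)
  -- a₁ : W11 → W01
  · intro x hx
    suffices hsub : W11 ≤ Submodule.comap a₁ W01 by exact hsub hx
    refine Submodule.span_le.mpr ?_
    rintro y ⟨j, hj, hje, rfl⟩
    have hj2 : j % 2 = 0 := Nat.even_iff.mp hje
    simp only [SetLike.mem_coe, Submodule.mem_comap]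
    rw [← hsgm j, hva1]
    exact h01 _ (fun k hk => opA_supp _ _ _ hl2 hj (by omega))
      (fun k hk => by rw [opA_symm_anti _ (by norm_num) hj hk]; try ring)
  -- a₂ : W00 → W01
  · intro x hx
    suffices hsub : W00 ≤ Submodule.comap a₂ W01 by exact hsub hx
    refine Submodule.span_le.mpr ?_
    rintro y ⟨j, hj, hje, rfl⟩
    have hj2 : j % 2 = 0 := Nat.even_iff.mp hje
    simp only [SetLike.mem_coe, Submodule.mem_comap]
    rw [← hsgp j, hva2]
    exact h01 _ (fun k hk => opA_supp _ _ _ hl2 hj (by omega))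
      (fun k hk => by rw [opA_symm_sym _ (by norm_num) hj hk]; try ring)
  -- a₂ : W01 → W00
  · intro x hx
    suffices hsub : W01 ≤ Submodule.comap a₂ W00 by exact hsub hx
    refine Submodule.span_le.mpr ?_
    rintro y ⟨j, hj, hje, rfl⟩
    have hj2 : j % 2 = 1 := Nat.odd_iff.mp hje
    simp only [SetLike.mem_coe, Submodule.mem_comap]
    rw [← hsgp j, hva2]
    exact h00 _ (fun k hk => opA_supp _ _ _ hl2 hj (by omega))
      (fun k hk => by rw [opA_symm_sym _ (by norm_num) hj hk]; try ring)
  -- a₂ : W10 → W11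
  · intro x hx
    suffices hsub : W10 ≤ Submodule.comap a₂ W11 by exact hsub hx
    refine Submodule.span_le.mpr ?_
    rintro y ⟨j, hj, hje, rfl⟩
    have hj2 : j % 2 = 1 := Nat.odd_iff.mp hje
    simp only [SetLike.mem_coe, Submodule.mem_comap]
    rw [← hsgm j, hva2]
    exact h11 _ (fun k hk => opA_supp _ _ _ hl2 hj (by omega))
      (fun k hk => by rw [opA_symm_sym _ (by norm_num) hj hk]; try ring)
  -- a₂ : W11 → W10
  · intro x hx
    suffices hsub : W11 ≤ Submodule.comap a₂ W10 by exact hsub hx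
    refine Submodule.span_le.mpr ?_
    rintro y ⟨j, hj, hje, rfl⟩
    have hj2 : j % 2 = 0 := Nat.even_iff.mp hje
    simp only [SetLike.mem_coe, Submodule.mem_comap]
    rw [← hsgm j, hva2]
    exact h10 _ (fun k hk => opA_supp _ _ _ hl2 hj (by omega))
      (fun k hk => by rw [opA_symm_sym _ (by norm_num) hj hk]; try ring)
  -- a₃ : W00 → W11
  · intro x hx
    suffices hsub : W00 ≤ Submodule.comap a₃ W11 by exact hsub hx
    refine Submodule.span_le.mpr ?_
    rintro y ⟨j, hj, hje, rfl⟩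
    have hj2 : j % 2 = 0 := Nat.even_iff.mp hje
    simp only [SetLike.mem_coe, Submodule.mem_comap]
    rw [← hsgp j, hva3]
    exact h11 _ (fun k hk => opH_supp _ _ hl2 hj (by omega))
      (fun k hk => by rw [opH_symm _ (by norm_num) hj hk]; try ring)
  -- a₃ : W11 → W00
  · intro x hx
    suffices hsub : W11 ≤ Submodule.comap a₃ W00 by exact hsub hx
    refine Submodule.span_le.mpr ?_
    rintro y ⟨j, hj, hje, rfl⟩
    have hj2 : j % 2 = 0 := Nat.even_iff.mp hje
    simp only [SetLike.mem_coe, Submodule.mem_comap]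
    rw [← hsgm j, hva3]
    exact h00 _ (fun k hk => opH_supp _ _ hl2 hj (by omega))
      (fun k hk => by rw [opH_symm _ (by norm_num) hj hk]; try ring)
  -- a₃ : W01 → W10
  · intro x hx
    suffices hsub : W01 ≤ Submodule.comap a₃ W10 by exact hsub hx
    refine Submodule.span_le.mpr ?_
    rintro y ⟨j, hj, hje, rfl⟩
    have hj2 : j % 2 = 1 := Nat.odd_iff.mp hje
    simp only [SetLike.mem_coe, Submodule.mem_comap]
    rw [← hsgp j, hva3]
    exact h10 _ (fun k hk => opH_supp _ _ hl2 hj (by omega))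
      (fun k hk => by rw [opH_symm _ (by norm_num) hj hk]; try ring)
  -- a₃ : W10 → W01
  · intro x hx
    suffices hsub : W10 ≤ Submodule.comap a₃ W01 by exact hsub hx
    refine Submodule.span_le.mpr ?_
    rintro y ⟨j, hj, hje, rfl⟩
    have hj2 : j % 2 = 1 := Nat.odd_iff.mp hje
    simp only [SetLike.mem_coe, Submodule.mem_comap]
    rw [← hsgm j, hva3]
    exact h01 _ (fun k hk => opH_supp _ _ hl2 hj (by omega))
      (fun k hk => by rw [opH_symm _ (by norm_num) hj hk]; try ring)
end
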